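/- arXiv:2109.05564 — 7 statements merged into one kernel-verified Lean document; each statement's English description precedes it below -/
import Mathlib

section
/- The linear span of the family of put payoff functions {x ↦ (k−x)⁺ : k ≥ 0} is dense in L¹(dF). -/
open MeasureTheory Set

section putdense

lemma tent_eq (b h x : ℝ) (hh : 0 ≤ h) :
    max (b + h - x) 0 - 2 * max (b - x) 0 + max (b - h - x) 0 = max (h - |x - b|) 0 := by
  rcases le_total x b with hx | hx
  · rw [abs_of_nonpos (by linarith)]
    simp only [max_def]; split_ifs <;> linarith
  · rw [abs_of_nonneg (by linarith)]
    simp only [max_def]; split_ifs <;> linarith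

end putdense

lemma interp (f : ℝ → ℝ) (h : ℝ) (hh : 0 < h) (n : ℕ) (C : ℝ)
    (hfC : ∀ y : ℝ, C ≤ y → f y = 0) (hnC : C < n * h) (ε' : ℝ)
    (hmod : ∀ y z : ℝ, |y - z| ≤ h → |f y - f z| ≤ ε')
    (x : ℝ) (hx : 0 ≤ x) :
    |f x - ∑ j ∈ Finset.range (n+1), f (j*h) * (max (h - |x - j*h|) 0 / h)| ≤ ε' := by
  have hε' : 0 ≤ ε' := by simpa using hmod 0 0 (by simp [hh.le])
  set j := ⌊x / h⌋₊ with hj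
  rcases le_or_gt n j with hjn | hjn
  · -- x beyond the support: everything vanishes
    have hxn : (n : ℝ) * h ≤ x := by
      have h1 : (n : ℝ) ≤ x / h := by
        exact_mod_cast (Nat.le_floor_iff (div_nonneg hx hh.le)).1 hjn
      calc (n:ℝ) * h ≤ (x/h) * h := by nlinarith
        _ = x := div_mul_cancel₀ x hh.ne'
    have hfx : f x = 0 := hfC x (by linarith)
    have hsum : ∑ m ∈ Finset.range (n+1), f (m*h) * (max (h - |x - m*h|) 0 / h) = 0 := by
      apply Finset.sum_eq_zero
      intro m hm
      rcases eq_or_lt_of_le (Nat.lt_succ_iff.1 (Finset.mem_range.1 hm)) with hmn | hmn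
      · rw [hmn, hfC ((n:ℝ)*h) (by linarith), zero_mul]
      · have hm1 : (m : ℝ) + 1 ≤ n := by exact_mod_cast hmn
        have : h ≤ |x - m*h| := by
          rw [abs_of_nonneg (by nlinarith)]
          nlinarith
        rw [max_eq_right (by linarith), zero_div, mul_zero]
    rw [hsum, hfx]; simpa using hε'
  · -- x in [j h, (j+1) h)
    have hxj : (j : ℝ) * h ≤ x := by
      have := Nat.floor_le (div_nonneg hx hh.le)
      calc (j:ℝ) * h ≤ (x/h) * h := by nlinarith
        _ = x := div_mul_cancel₀ x hh.ne'
    have hxj1 : x < ((j:ℝ) + 1) * h := by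
      have := Nat.lt_floor_add_one (x / h)
      calc x = (x/h) * h := (div_mul_cancel₀ x hh.ne').symm
        _ < ((j:ℝ)+1) * h := by nlinarith
    have hsub : ({j, j+1} : Finset ℕ) ⊆ Finset.range (n+1) := by
      intro m hm
      simp only [Finset.mem_insert, Finset.mem_singleton] at hm
      rcases hm with rfl | rfl <;> simp [Finset.mem_range] <;> omega
    have hsum : ∑ m ∈ Finset.range (n+1), f (m*h) * (max (h - |x - m*h|) 0 / h)
        = ∑ m ∈ ({j, j+1} : Finset ℕ), f (m*h) * (max (h - |x - m*h|) 0 / h) := by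
      refine (Finset.sum_subset hsub ?_).symm
      intro m _ hm
      simp only [Finset.mem_insert, Finset.mem_singleton] at hm
      push_neg at hm
      have : h ≤ |x - m*h| := by
        rcases lt_or_gt_of_ne hm.1 with h1 | h1
        · -- m < j
          have hm1 : (m : ℝ) + 1 ≤ j := by exact_mod_cast h1
          rw [abs_of_nonneg (by nlinarith)]; nlinarith
        · -- m > j+1
          have hm1 : (j : ℝ) + 2 ≤ m := by
            have : j + 2 ≤ m := by omega
            exact_mod_cast this
          rw [abs_of_nonpos (by nlinarith)]; nlinarith
      rw [max_eq_right (by linarith), zero_div, mul_zero]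
    rw [hsum, Finset.sum_pair (by omega)]
    have e1 : |x - (j:ℝ)*h| = x - j*h := abs_of_nonneg (by linarith)
    have e2 : |x - ((j:ℕ)+1:ℕ)*h| = ((j:ℝ)+1)*h - x := by
      push_cast
      rw [abs_of_nonpos (by linarith)]; ring
    rw [e1, e2]
    have m1 : max (h - (x - (j:ℝ)*h)) 0 = h - (x - j*h) := max_eq_left (by nlinarith)
    have m2 : max (h - (((j:ℝ)+1)*h - x)) 0 = x - (j:ℝ)*h := by
      rw [max_eq_left (by nlinarith)]; ring
    rw [m1, m2]
    have hb1 : |f x - f ((j:ℝ)*h)| ≤ ε' := hmod x ((j:ℝ)*h) (by rw [e1]; nlinarith)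
    have hb2 : |f x - f (((j:ℕ)+1:ℕ)*h)| ≤ ε' := by
      apply hmod
      push_cast
      rw [abs_of_nonpos (by linarith)]; nlinarith
    have key : f x - (f ((j:ℕ)*h) * ((h - (x - (j:ℕ)*h))/h) + f (((j:ℕ)+1:ℕ)*h) * ((x - (j:ℕ)*h)/h))
        = ((h - (x - (j:ℕ)*h))/h) * (f x - f ((j:ℕ)*h))
          + ((x - (j:ℕ)*h)/h) * (f x - f (((j:ℕ)+1:ℕ)*h)) := by
      field_simp; ring
    push_cast at key ⊢
    rw [key]
    have t1 : (0:ℝ) ≤ (h - (x - (j:ℝ)*h))/h := div_nonneg (by linarith) hh.le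
    have t2 : (0:ℝ) ≤ (x - (j:ℝ)*h)/h := div_nonneg (by linarith) hh.le
    calc |((h - (x - (j:ℝ)*h))/h) * (f x - f ((j:ℝ)*h)) + ((x - (j:ℝ)*h)/h) * (f x - f (((j:ℝ)+1)*h))|
        ≤ |((h - (x - (j:ℝ)*h))/h) * (f x - f ((j:ℝ)*h))| + |((x - (j:ℝ)*h)/h) * (f x - f (((j:ℝ)+1)*h))| := abs_add_le _ _
      _ = ((h - (x - (j:ℝ)*h))/h) * |f x - f ((j:ℝ)*h)| + ((x - (j:ℝ)*h)/h) * |f x - f (((j:ℝ)+1)*h)| := by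
          rw [abs_mul, abs_mul, abs_of_nonneg t1, abs_of_nonneg t2]
      _ ≤ ((h - (x - (j:ℝ)*h))/h) * ε' + ((x - (j:ℝ)*h)/h) * ε' := by
          push_cast at hb1 hb2
          gcongr
      _ = ε' := by field_simp; ring


/-- The linear span of the put payoff profiles `x ↦ (k−x)⁺`, `k ≥ 0`, is dense
in `L¹(dF)` for a finite measure `dF` on `[0,∞)`. -/
theorem put_payoffs_dense_L1 (μ : Measure ℝ) [IsFiniteMeasure μ]
    (g : ℝ → ℝ) (hg : Integrable g (μ.restrict (Set.Ici (0:ℝ))))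
    (ε : ℝ) (hε : 0 < ε) :
    ∃ (n : ℕ) (c : Fin n → ℝ) (k : Fin n → ℝ), (∀ i, 0 ≤ k i) ∧
      (∫ x in Set.Ici (0:ℝ),
        |g x - ∑ i, c i * max (k i - x) 0| ∂μ) < ε := by
  classical
  set ν := μ.restrict (Set.Ici (0:ℝ)) with hν
  obtain ⟨f, hf_supp, hf_close, hf_cont, hf_int⟩ :=
    hg.exists_hasCompactSupport_integral_sub_le (show (0:ℝ) < ε/3 by linarith)
  have hf_uc : UniformContinuous f := hf_supp.uniformContinuous_of_continuous hf_cont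
  set M : ℝ := (μ (Set.Ici (0:ℝ))).toReal with hM
  have hM0 : 0 ≤ M := ENNReal.toReal_nonneg
  set ε' : ℝ := ε / (3 * (M + 1)) with hε'def
  have hε'pos : 0 < ε' := by positivity
  obtain ⟨δ, hδpos, hδ⟩ := Metric.uniformContinuous_iff.1 hf_uc ε' hε'pos
  obtain ⟨C0, hC0⟩ := isBounded_iff_forall_norm_le.1 hf_supp.isCompact.isBounded
  set C : ℝ := C0 + 1 with hCdef
  have hC : ∀ y : ℝ, C ≤ y → f y = 0 := by
    intro y hy
    apply image_eq_zero_of_notMem_tsupport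
    intro hmem
    have h1 := hC0 y hmem
    rw [Real.norm_eq_abs] at h1
    have : y ≤ C0 := le_trans (le_abs_self y) h1
    linarith
  set h : ℝ := min (δ/2) 1 with hhdef
  have hh : 0 < h := lt_min (by linarith) one_pos
  have hhδ : h < δ := lt_of_le_of_lt (min_le_left _ _) (by linarith)
  set n : ℕ := ⌊C/h⌋₊ + 1 with hndef
  have hnC : C < n * h := by
    have h1 : C / h < (n : ℝ) := by
      rw [hndef]; push_cast
      exact Nat.lt_floor_add_one (C/h)
    calc C = (C/h) * h := (div_mul_cancel₀ C hh.ne').symm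
      _ < (n:ℝ) * h := by nlinarith
  have hmod : ∀ y z : ℝ, |y - z| ≤ h → |f y - f z| ≤ ε' := by
    intro y z hyz
    have := hδ (a := y) (b := z) (by rw [Real.dist_eq]; linarith)
    rw [Real.dist_eq] at this
    linarith
  set P : ℝ → ℝ := fun x => ∑ j ∈ Finset.range (n+1), f (j*h) * (max (h - |x - j*h|) 0 / h)
    with hPdef
  -- uniform approximation on [0, ∞)
  have hP : ∀ x : ℝ, 0 ≤ x → |f x - P x| ≤ ε' := fun x hx =>
    interp f h hh n C hC hnC ε' hmod x hx
  -- the coefficients and strikes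
  set cA : Fin 3 → Fin (n+1) → ℝ :=
    ![fun j => f (j*h)/h,
      fun j => if (j:ℕ) = 0 then 0 else -2 * f (j*h)/h,
      fun j => if (j:ℕ) = 0 then 0 else f (j*h)/h] with hcA
  set cK : Fin 3 → Fin (n+1) → ℝ :=
    ![fun j => (((j:ℕ):ℝ)+1)*h,
      fun j => ((j:ℕ):ℝ)*h,
      fun j => if (j:ℕ) = 0 then 0 else (((j:ℕ):ℝ)-1)*h] with hcK
  refine ⟨(n+1)*3, fun i => cA (finProdFinEquiv.symm i).2 (finProdFinEquiv.symm i).1,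
    fun i => cK (finProdFinEquiv.symm i).2 (finProdFinEquiv.symm i).1, ?_, ?_⟩
  · intro i
    have : ∀ (a : Fin 3) (j : Fin (n+1)), 0 ≤ cK a j := by
      intro a j
      fin_cases a
      · show (0:ℝ) ≤ cK 0 j
        rw [hcK]
        simp only [Matrix.cons_val_zero]
        exact mul_nonneg (by positivity) hh.le
      · show (0:ℝ) ≤ cK 1 j
        rw [hcK]
        simp only [Matrix.cons_val_one, Matrix.head_cons]
        exact mul_nonneg (Nat.cast_nonneg _) hh.le
      · show (0:ℝ) ≤ cK 2 j
        rw [hcK]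
        simp only [Matrix.cons_val_two, Matrix.tail_cons, Matrix.head_cons]
        split_ifs with hj
        · exact le_refl 0
        · refine mul_nonneg ?_ hh.le
          have : (1:ℝ) ≤ ((j:ℕ):ℝ) := by
            exact_mod_cast Nat.one_le_iff_ne_zero.2 hj
          linarith
    exact this _ _
  · -- the sum equals P on [0,∞)
    have hSP : ∀ x : ℝ, 0 ≤ x →
        (∑ i : Fin ((n+1)*3), cA (finProdFinEquiv.symm i).2 (finProdFinEquiv.symm i).1 *
          max (cK (finProdFinEquiv.symm i).2 (finProdFinEquiv.symm i).1 - x) 0) = P x := by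
      intro x hx
      have step1 : (∑ i : Fin ((n+1)*3), cA (finProdFinEquiv.symm i).2 (finProdFinEquiv.symm i).1 *
          max (cK (finProdFinEquiv.symm i).2 (finProdFinEquiv.symm i).1 - x) 0)
          = ∑ p : Fin (n+1) × Fin 3, cA p.2 p.1 * max (cK p.2 p.1 - x) 0 :=
        Equiv.sum_comp finProdFinEquiv.symm (fun p => cA p.2 p.1 * max (cK p.2 p.1 - x) 0)
      rw [step1, Fintype.sum_prod_type]
      simp only [hPdef]
      rw [← Fin.sum_univ_eq_sum_range (fun j => f (j*h) * (max (h - |x - j*h|) 0 / h)) (n+1)]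
      apply Finset.sum_congr rfl
      intro j _
      rw [Fin.sum_univ_three]
      rw [hcA, hcK]
      simp only [Matrix.cons_val_zero, Matrix.cons_val_one, Matrix.head_cons,
        Matrix.cons_val_two, Matrix.tail_cons]
      rcases Nat.eq_zero_or_pos (j:ℕ) with hj0 | hjpos
      · norm_num [hj0, abs_of_nonneg hx]
        ring
      · have hjne : (j:ℕ) ≠ 0 := hjpos.ne'
        simp only [if_neg hjne]
        have key := tent_eq (((j:ℕ):ℝ)*h) h x hh.le
        have e1 : (((j:ℕ):ℝ)+1)*h = ((j:ℕ):ℝ)*h + h := by ring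
        have e2 : (((j:ℕ):ℝ)-1)*h = ((j:ℕ):ℝ)*h - h := by ring
        rw [e1, e2, ← key]
        ring
    -- integrability of P
    have hPint : Integrable P ν := by
      simp only [hPdef]
      apply integrable_finset_sum
      intro j _
      apply Continuous.integrable_of_hasCompactSupport
      · exact continuous_const.mul (((continuous_const.sub
          ((continuous_id.sub continuous_const).abs)).max continuous_const).div_const h)
      · apply HasCompactSupport.intro (isCompact_Icc (a := (j:ℝ)*h - h) (b := (j:ℝ)*h + h))
        intro x hx
        simp only [Set.mem_Icc, not_and_or, not_le] at hx
        have : h ≤ |x - (j:ℝ)*h| := by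
          rcases hx with hx | hx
          · rw [abs_of_nonpos (by linarith)]; linarith
          · rw [abs_of_nonneg (by linarith)]; linarith
        rw [max_eq_right (by linarith), zero_div, mul_zero]
    -- bound ∫ |f - P| ∂ν
    have hνuniv : (ν Set.univ).toReal = M := by
      rw [hν, Measure.restrict_apply_univ]
    have hfP : ∫ x, |f x - P x| ∂ν ≤ ε' * M := by
      have hb : ∀ᵐ x ∂ν, ‖|f x - P x|‖ ≤ ε' :=
        ae_restrict_of_forall_mem measurableSet_Ici
          (fun x hx => by rw [Real.norm_eq_abs, abs_abs]; exact hP x hx)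
      calc ∫ x, |f x - P x| ∂ν = ‖∫ x, |f x - P x| ∂ν‖ :=
            (Real.norm_of_nonneg (integral_nonneg fun x => abs_nonneg _)).symm
        _ ≤ ε' * (ν Set.univ).toReal := norm_integral_le_of_norm_le_const hb
        _ = ε' * M := by rw [hνuniv]
    have hε'M : ε' * M ≤ ε/3 := by
      rw [hε'def, div_mul_eq_mul_div, div_le_div_iff₀ (by positivity) (by norm_num)]
      nlinarith
    -- final chain
    have habs : ∀ x : ℝ, |g x - P x| ≤ |g x - f x| + |f x - P x| :=
      fun x => abs_sub_le (g x) (f x) (P x)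
    have hint1 : Integrable (fun x => |g x - f x|) ν := (hg.sub hf_int).abs
    have hint2 : Integrable (fun x => |f x - P x|) ν := (hf_int.sub hPint).abs
    have hcong : (∫ x in Set.Ici (0:ℝ), |g x - ∑ i : Fin ((n+1)*3),
          cA (finProdFinEquiv.symm i).2 (finProdFinEquiv.symm i).1 *
          max (cK (finProdFinEquiv.symm i).2 (finProdFinEquiv.symm i).1 - x) 0| ∂μ)
        = ∫ x, |g x - P x| ∂ν := by
      rw [hν]
      apply setIntegral_congr_fun measurableSet_Ici
      intro x hx
      simp only [hSP x hx]
    rw [hcong]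
    have hmono : ∫ x, |g x - P x| ∂ν ≤ ∫ x, (|g x - f x| + |f x - P x|) ∂ν := by
      apply integral_mono_of_nonneg (ae_of_all _ fun x => abs_nonneg _) (hint1.add hint2)
      exact ae_of_all _ fun x => habs x
    have hadd : ∫ x, (|g x - f x| + |f x - P x|) ∂ν
        = (∫ x, |g x - f x| ∂ν) + ∫ x, |f x - P x| ∂ν := integral_add hint1 hint2
    have hgf : ∫ x, |g x - f x| ∂ν ≤ ε/3 := by
      simp only [Real.norm_eq_abs] at hf_close
      exact hf_close
    calc ∫ x, |g x - P x| ∂ν ≤ ∫ x, (|g x - f x| + |f x - P x|) ∂ν := hmono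
      _ = (∫ x, |g x - f x| ∂ν) + ∫ x, |f x - P x| ∂ν := hadd
      _ ≤ ε/3 + ε' * M := add_le_add hgf hfP
      _ ≤ ε/3 + ε/3 := by linarith
      _ < ε := by linarith
end

section
/- For every a ≥ 0, F(a) = lim_{b→a⁺} (P(b) − P(a))/(b − a), i.e. the right difference quotients of the put price function converge to the distribution function evaluated at a. -/
open MeasureTheory Set Filter

lemma put_integrable (μ : Measure ℝ) (hfin : ∀ r : ℝ, μ (Set.Icc 0 r) < ⊤)
    (k : ℝ) (hk : 0 ≤ k) :
    IntegrableOn (fun x => max (k - x) 0) (Set.Ici (0:ℝ)) μ := by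
  have hsub : Set.Ici (0:ℝ) ⊆ Set.Icc 0 k ∪ Set.Ioi k := by
    intro x hx
    rcases le_or_gt x k with h | h
    · exact Or.inl ⟨hx, h⟩
    · exact Or.inr h
  apply IntegrableOn.mono_set _ hsub
  apply IntegrableOn.union
  · apply Measure.integrableOn_of_bounded (hfin k).ne
      (Continuous.aestronglyMeasurable (by continuity)) (M := k)
    filter_upwards [ae_restrict_mem measurableSet_Icc] with x hx
    rw [Real.norm_eq_abs, abs_of_nonneg (le_max_right _ _)]
    rcases hx with ⟨h0, hk'⟩
    simp only [max_le_iff]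
    constructor <;> linarith
  · have : EqOn (fun x => max (k - x) 0) (fun _ => (0:ℝ)) (Set.Ioi k) := by
      intro x hx
      simp only
      rw [max_eq_right (by simp at hx; linarith)]
    exact (integrableOn_congr_fun this measurableSet_Ioi).mpr (integrableOn_zero)

lemma put_diff_bound (μ : Measure ℝ) (hfin : ∀ r : ℝ, μ (Set.Icc 0 r) < ⊤)
    (a b : ℝ) (ha : 0 ≤ a) (hab : a < b) :
    (∫ x in Set.Ici (0:ℝ), max (b - x) 0 ∂μ) - (∫ x in Set.Ici (0:ℝ), max (a - x) 0 ∂μ)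
      ∈ Set.Icc ((b - a) * (μ (Set.Icc 0 a)).toReal)
          ((b - a) * (μ (Set.Icc 0 b)).toReal) := by
  have hb : (0:ℝ) ≤ b := le_of_lt (lt_of_le_of_lt ha hab)
  have hIb := put_integrable μ hfin b hb
  have hIa := put_integrable μ hfin a ha
  have hdiff : (∫ x in Set.Ici (0:ℝ), max (b - x) 0 ∂μ) -
      (∫ x in Set.Ici (0:ℝ), max (a - x) 0 ∂μ)
      = ∫ x in Set.Ici (0:ℝ), (max (b - x) 0 - max (a - x) 0) ∂μ :=
    (integral_sub hIb hIa).symm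
  have hg : IntegrableOn (fun x => max (b - x) 0 - max (a - x) 0) (Set.Ici (0:ℝ)) μ :=
    hIb.sub hIa
  -- lower bound function
  have hind_a : IntegrableOn (fun x => (b - a) * (Set.Icc (0:ℝ) a).indicator (fun _ => (1:ℝ)) x)
      (Set.Ici (0:ℝ)) μ := by
    apply Integrable.const_mul
    rw [integrable_indicator_iff measurableSet_Icc]
    apply (integrableOn_const_iff (C := (1:ℝ))).mpr
    right
    exact lt_of_le_of_lt (Measure.restrict_apply_le _ _) (hfin a)
  have hind_b : IntegrableOn (fun x => (b - a) * (Set.Icc (0:ℝ) b).indicator (fun _ => (1:ℝ)) x)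
      (Set.Ici (0:ℝ)) μ := by
    apply Integrable.const_mul
    rw [integrable_indicator_iff measurableSet_Icc]
    apply (integrableOn_const_iff (C := (1:ℝ))).mpr
    right
    exact lt_of_le_of_lt (Measure.restrict_apply_le _ _) (hfin b)
  have hint_ind : ∀ c : ℝ, 0 ≤ c →
      (∫ x in Set.Ici (0:ℝ), (b - a) * (Set.Icc (0:ℝ) c).indicator (fun _ => (1:ℝ)) x ∂μ)
        = (b - a) * (μ (Set.Icc 0 c)).toReal := by
    intro c hc
    rw [integral_const_mul, integral_indicator measurableSet_Icc]
    rw [Measure.restrict_restrict measurableSet_Icc]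
    have : Set.Icc (0:ℝ) c ∩ Set.Ici 0 = Set.Icc 0 c := by
      apply inter_eq_self_of_subset_left
      intro x hx; exact hx.1
    rw [this, setIntegral_const, smul_eq_mul, mul_one]; rfl
  constructor
  · rw [hdiff, ← hint_ind a ha]
    apply setIntegral_mono_on hind_a hg measurableSet_Ici
    intro x hx
    simp only [Set.indicator_apply]
    by_cases hxa : x ∈ Set.Icc (0:ℝ) a
    · simp only [hxa, if_pos, mul_one]
      rw [max_eq_left (by rcases hxa with ⟨_, h2⟩; linarith),
        max_eq_left (by rcases hxa with ⟨_, h2⟩; linarith)]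
      ring_nf; rfl
    · simp only [hxa, if_neg, if_false, mul_zero]
      have : max (a - x) 0 ≤ max (b - x) 0 := by
        apply max_le_max _ le_rfl; linarith
      linarith
  · rw [hdiff, ← hint_ind b hb]
    apply setIntegral_mono_on hg hind_b measurableSet_Ici
    intro x hx
    simp only [Set.indicator_apply]
    by_cases hxb : x ∈ Set.Icc (0:ℝ) b
    · simp only [hxb, if_pos, mul_one]
      have h1 : max (b - x) 0 ≤ b - a + max (a - x) 0 := by
        rcases le_total x a with h | h
        · rw [max_eq_left (by linarith), max_eq_left (by linarith)]; linarith
        · rcases hxb with ⟨_, h2⟩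
          rw [max_eq_left (by linarith)]
          have := le_max_right (a - x) 0
          linarith
      linarith
    · simp only [hxb, if_neg, if_false, mul_zero]
      have hxgt : b < x := by
        simp only [Set.mem_Icc, not_and, not_le] at hxb
        exact hxb (Set.mem_Ici.mp hx)
      rw [max_eq_right (by linarith), max_eq_right (by linarith)]
      simp

/-- The right difference quotients of the put price function converge to the
distribution function: `F(a) = lim_{b→a⁺} (P(b) − P(a))/(b − a)`. -/
theorem F_eq_right_diff_quotient_of_put (μ : Measure ℝ)
    (hfin : ∀ r : ℝ, μ (Set.Icc 0 r) < ⊤)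
    (P F : ℝ → ℝ)
    (hP : ∀ k : ℝ, P k = ∫ x in Set.Ici (0:ℝ), max (k - x) 0 ∂μ)
    (hF : ∀ x : ℝ, F x = (μ (Set.Icc 0 x)).toReal) :
    ∀ a : ℝ, 0 ≤ a →
      Tendsto (fun b => (P b - P a) / (b - a)) (nhdsWithin a (Set.Ioi a))
        (nhds (F a)) := by
  intro a ha
  -- continuity of measure: μ (Ioc a b) → 0 as b → a⁺
  have hmeas : Tendsto (fun b => μ (Set.Ioc a b)) (nhdsWithin a (Set.Ioi a)) (nhds 0) := by
    have hsub : Set.Ioc a (a + 1) ⊆ Set.Icc 0 (a + 1) := fun x hx =>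
      ⟨le_of_lt (lt_of_le_of_lt ha hx.1), hx.2⟩
    have h := tendsto_measure_biInter_gt (μ := μ) (s := fun b => Set.Ioc a b) (a := a)
      (fun r _ => measurableSet_Ioc.nullMeasurableSet)
      (fun i j _ hij => Set.Ioc_subset_Ioc_right hij)
      ⟨a + 1, by linarith, ne_of_lt (lt_of_le_of_lt (measure_mono hsub) (hfin (a + 1)))⟩
    have hempty : ⋂ r > a, Set.Ioc a r = ∅ := by
      ext x
      simp only [Set.mem_iInter, Set.mem_Ioc, Set.mem_empty_iff_false, iff_false, not_forall]
      rcases lt_or_ge a x with hax | hax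
      · exact ⟨(a + x) / 2, by linarith, fun h => absurd h.2 (by push_neg; linarith)⟩
      · exact ⟨a + 1, by linarith, fun h => absurd h.1 (not_lt.mpr hax)⟩
    rw [hempty, measure_empty] at h
    exact h
  have herr : Tendsto (fun b => (μ (Set.Ioc a b)).toReal) (nhdsWithin a (Set.Ioi a)) (nhds 0) := by
    have := (ENNReal.tendsto_toReal (by simp : (0:ENNReal) ≠ ⊤)).comp hmeas
    simpa [Function.comp_def] using this
  -- pointwise bounds
  have key : ∀ b ∈ Set.Ioi a, (P b - P a) / (b - a) - F a ∈
      Set.Icc 0 ((μ (Set.Ioc a b)).toReal) := by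
    intro b hb
    rw [Set.mem_Ioi] at hb
    have hba : (0:ℝ) < b - a := by linarith
    have hbound := put_diff_bound μ hfin a b ha hb
    rw [← hP a, ← hP b] at hbound
    obtain ⟨h1, h2⟩ := hbound
    have hFab : F b - F a = (μ (Set.Ioc a b)).toReal := by
      have hunion : Set.Icc (0:ℝ) a ∪ Set.Ioc a b = Set.Icc 0 b :=
        Set.Icc_union_Ioc_eq_Icc ha (le_of_lt hb)
      have hdisj : Disjoint (Set.Icc (0:ℝ) a) (Set.Ioc a b) := by
        rw [Set.disjoint_left]
        rintro x ⟨_, hxa⟩ ⟨hax, _⟩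
        exact absurd hxa (not_le.mpr hax)
      have hμ : μ (Set.Icc 0 b) = μ (Set.Icc 0 a) + μ (Set.Ioc a b) := by
        rw [← hunion, measure_union hdisj measurableSet_Ioc]
      have hfa : μ (Set.Icc 0 a) ≠ ⊤ := (hfin a).ne
      have hfioc : μ (Set.Ioc a b) ≠ ⊤ := by
        intro hcontra
        have : μ (Set.Icc 0 b) = ⊤ := by simp [hμ, hcontra]
        exact (hfin b).ne this
      rw [hF a, hF b, hμ, ENNReal.toReal_add hfa hfioc]
      ring
    constructor
    · rw [hF a] at *
      have : (μ (Set.Icc 0 a)).toReal ≤ (P b - P a) / (b - a) :=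
        (le_div_iff₀ hba).mpr (by linarith [h1])
      linarith
    · rw [← hFab]
      have : (P b - P a) / (b - a) ≤ F b := by
        rw [div_le_iff₀ hba, hF b]
        linarith [h2]
      linarith
  have h1 : Tendsto (fun b => (P b - P a) / (b - a) - F a)
      (nhdsWithin a (Set.Ioi a)) (nhds 0) := by
    apply squeeze_zero'
    · filter_upwards [self_mem_nhdsWithin] with b hb using (key b hb).1
    · filter_upwards [self_mem_nhdsWithin] with b hb using (key b hb).2
    · exact herr
  have := h1.add (tendsto_const_nhds (x := F a))
  simpa using this
end

section
/- Representation of a convex function via call payoffs: let g be a real convex function defined on an open interval containing [0,∞), and let m be the Lebesgue–Stieltjes measure of its right derivative D⁺g. Then for every x ≥ 0, g(x) = g(0) + D⁺g(0)·x + ∫_{(0,∞)} (x−k)⁺ dm(k). -/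
open MeasureTheory Set
open scoped ENNReal

/-- Representation of a convex function via call payoffs: if `g` is convex on an
open interval `I = (c,∞) ⊇ [0,∞)`, `g'` is its right derivative, and `m` is the
Lebesgue–Stieltjes measure of `g'`, then for every `x ≥ 0`,
`g(x) = g(0) + D⁺g(0)·x + ∫_{(0,∞)} (x−k)⁺ dm(k)`. -/
theorem convex_call_representation (c : ℝ) (hc : c < 0)
    (g g' : ℝ → ℝ) (hg : ConvexOn ℝ (Set.Ioi c) g)
    (hg' : ∀ x ∈ Set.Ioi c, HasDerivWithinAt g (g' x) (Set.Ioi x) x)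
    (m : Measure ℝ)
    (hm : ∀ a b : ℝ, a ∈ Set.Ioi c → a ≤ b →
      m (Set.Ioc a b) = ENNReal.ofReal (g' b - g' a)) :
    ∀ x : ℝ, 0 ≤ x →
      g x = g 0 + g' 0 * x + ∫ k in Set.Ioi (0:ℝ), max (x - k) 0 ∂m := by
  have h0c : (0:ℝ) ∈ Ioi c := hc
  -- right derivative of a convex function is monotone
  have hmono : MonotoneOn g' (Ioi c) := by
    intro a ha b hb hab
    rcases eq_or_lt_of_le hab with rfl | hab
    · exact le_rfl
    have h1 : g' a ≤ slope g a b :=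
      hg.le_slope_of_hasDerivWithinAt_Ioi ha hb hab (hg' a ha)
    have h2 : slope g a b ≤ g' b := by
      apply ge_of_tendsto
        ((hasDerivWithinAt_iff_tendsto_slope' notMem_Ioi_self).mp (hg' b hb))
      filter_upwards [self_mem_nhdsWithin] with y (hy : b < y)
      have hyS : y ∈ Ioi c := lt_trans (mem_Ioi.mp hb) hy
      have := hg.slope_mono hb ⟨ha, hab.ne⟩ ⟨hyS, hy.ne'⟩ (hab.le.trans hy.le)
      rwa [slope_comm g b a] at this
    exact h1.trans h2
  have hgc : ContinuousOn g (Ioi c) := hg.continuousOn isOpen_Ioi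
  intro x hx
  have hIcc : Icc (0:ℝ) x ⊆ Ioi c := fun t ht => lt_of_lt_of_le hc ht.1
  have hint : IntervalIntegrable g' volume 0 x := by
    apply MonotoneOn.intervalIntegrable
    apply hmono.mono
    rw [uIcc_of_le hx]
    exact hIcc
  have hftc : ∫ t in (0:ℝ)..x, g' t = g x - g 0 :=
    intervalIntegral.integral_eq_sub_of_hasDeriv_right_of_le hx (hgc.mono hIcc)
      (fun t ht => hg' t (hIcc (Ioo_subset_Icc_self ht))) hint
  -- sigma-finiteness of m restricted to (0, ∞)
  have hsf : SigmaFinite (m.restrict (Ioi 0)) := by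
    refine ⟨⟨⟨fun n => Iic (n:ℝ), fun _ => trivial, fun n => ?_, ?_⟩⟩⟩
    · rw [Measure.restrict_apply measurableSet_Iic]
      have : Iic (n:ℝ) ∩ Ioi 0 = Ioc (0:ℝ) (n:ℝ) := by
        ext t; simp [mem_Ioc, and_comm]
      rw [this, hm 0 n h0c (Nat.cast_nonneg n)]
      exact ENNReal.ofReal_lt_top
    · refine eq_univ_of_forall fun t => mem_iUnion.mpr ⟨⌈t⌉₊, ?_⟩
      simpa using Nat.le_ceil t
  -- the double-integral function
  set F : ℝ → ℝ → ℝ≥0∞ := fun k t => (Ici k).indicator (fun _ => 1) t with hF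
  have hFmeas : AEMeasurable (Function.uncurry F)
      ((m.restrict (Ioi 0)).prod (volume.restrict (Ioo 0 x))) := by
    have : Function.uncurry F = ({p : ℝ × ℝ | p.1 ≤ p.2}).indicator (fun _ => 1) := by
      ext p
      by_cases h : p.1 ≤ p.2 <;>
        simp [Function.uncurry, hF, indicator, h, mem_Ici]
    rw [this]
    exact ((measurable_const.indicator
      (measurableSet_le measurable_fst measurable_snd))).aemeasurable
  -- key lintegral identity
  have key : ∫⁻ k in Ioi (0:ℝ), ENNReal.ofReal (max (x - k) 0) ∂m
      = ∫⁻ t in Ioo (0:ℝ) x, m (Ioc 0 t) := by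
    have step1 : ∀ k ∈ Ioi (0:ℝ),
        ENNReal.ofReal (max (x - k) 0) = ∫⁻ t in Ioo (0:ℝ) x, F k t := by
      intro k hk
      show _ = ∫⁻ t in Ioo (0:ℝ) x, (Ici k).indicator (fun _ => 1) t
      rw [lintegral_indicator measurableSet_Ici]
      simp only [lintegral_const, Measure.restrict_restrict measurableSet_Ici,
        Measure.restrict_apply MeasurableSet.univ, univ_inter, one_mul]
      have : Ici k ∩ Ioo 0 x = Ico k x := by
        ext t
        simp only [mem_inter_iff, mem_Ici, mem_Ioo, mem_Ico]
        constructor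
        · rintro ⟨h1, h2, h3⟩; exact ⟨h1, h3⟩
        · rintro ⟨h1, h2⟩; exact ⟨h1, lt_of_lt_of_le hk h1, h2⟩
      rw [this, Real.volume_Ico]
      rcases le_total k x with h | h
      · rw [max_eq_left (by linarith)]
      · rw [max_eq_right (by linarith), ENNReal.ofReal_zero,
          ENNReal.ofReal_eq_zero.mpr (by linarith)]
    have step2 : ∀ t ∈ Ioo (0:ℝ) x,
        (∫⁻ k in Ioi (0:ℝ), F k t ∂m) = m (Ioc 0 t) := by
      intro t ht
      have : ∀ k, F k t = (Iic t).indicator (fun _ => (1:ℝ≥0∞)) k := by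
        intro k
        by_cases h : k ≤ t <;> simp [hF, indicator, h, mem_Ici, mem_Iic]
      simp_rw [this]
      rw [lintegral_indicator measurableSet_Iic]
      simp only [lintegral_const, Measure.restrict_restrict measurableSet_Iic,
        Measure.restrict_apply MeasurableSet.univ, univ_inter, one_mul]
      congr 1
      ext s; simp [mem_Ioc, and_comm]
    calc ∫⁻ k in Ioi (0:ℝ), ENNReal.ofReal (max (x - k) 0) ∂m
        = ∫⁻ k in Ioi (0:ℝ), (∫⁻ t in Ioo (0:ℝ) x, F k t) ∂m := by
          exact setLIntegral_congr_fun measurableSet_Ioi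
            step1
      _ = ∫⁻ t in Ioo (0:ℝ) x, (∫⁻ k in Ioi (0:ℝ), F k t ∂m) := by
          haveI := hsf
          exact lintegral_lintegral_swap hFmeas
      _ = ∫⁻ t in Ioo (0:ℝ) x, m (Ioc 0 t) := by
          exact setLIntegral_congr_fun measurableSet_Ioo
            step2
  -- rewrite m (Ioc 0 t) via hm and convert to a real integral
  have hInt : IntegrableOn (fun t => g' t - g' 0) (Ioo 0 x) volume := by
    have : IntegrableOn g' (Ioo 0 x) volume := by
      have := (intervalIntegrable_iff_integrableOn_Icc_of_le hx).mp hint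
      exact this.mono_set Ioo_subset_Icc_self
    exact this.sub (integrableOn_const measure_Ioo_lt_top.ne)
  have hnn : ∀ t ∈ Ioo (0:ℝ) x, 0 ≤ g' t - g' 0 := by
    intro t ht
    have := hmono h0c (lt_trans hc ht.1 : t ∈ Ioi c) ht.1.le
    linarith
  have key2 : ∫⁻ t in Ioo (0:ℝ) x, m (Ioc 0 t)
      = ENNReal.ofReal (∫ t in Ioo (0:ℝ) x, (g' t - g' 0)) := by
    calc ∫⁻ t in Ioo (0:ℝ) x, m (Ioc 0 t)
        = ∫⁻ t in Ioo (0:ℝ) x, ENNReal.ofReal (g' t - g' 0) := by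
          apply setLIntegral_congr_fun measurableSet_Ioo
          exact fun t ht => hm 0 t h0c ht.1.le
      _ = ENNReal.ofReal (∫ t in Ioo (0:ℝ) x, (g' t - g' 0)) :=
          (ofReal_integral_eq_lintegral_ofReal hInt
            ((ae_restrict_iff' measurableSet_Ioo).mpr (Filter.Eventually.of_forall hnn))).symm
  have hreal : ∫ t in Ioo (0:ℝ) x, (g' t - g' 0) = g x - g 0 - g' 0 * x := by
    rw [← integral_Ioc_eq_integral_Ioo]
    have h1 : ∫ t in Ioc (0:ℝ) x, (g' t - g' 0) = ∫ t in (0:ℝ)..x, (g' t - g' 0) := by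
      rw [intervalIntegral.integral_of_le hx]
    rw [h1, intervalIntegral.integral_sub hint intervalIntegrable_const, hftc]
    simp [mul_comm]
  -- put everything together
  have hmeas : AEStronglyMeasurable (fun k => max (x - k) 0) (m.restrict (Ioi 0)) :=
    (Continuous.max (continuous_const.sub continuous_id) continuous_const).aestronglyMeasurable
  have hfin : 0 ≤ g x - g 0 - g' 0 * x := by
    rw [← hreal]
    exact setIntegral_nonneg measurableSet_Ioo hnn
  have : ∫ k in Ioi (0:ℝ), max (x - k) 0 ∂m
      = (∫⁻ k in Ioi (0:ℝ), ENNReal.ofReal (max (x - k) 0) ∂m).toReal := by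
    rw [integral_eq_lintegral_of_nonneg_ae (f := fun k => max (x - k) 0)
      (Filter.Eventually.of_forall fun k => le_max_right _ _) hmeas]
  rw [this, key, key2, hreal, ENNReal.toReal_ofReal hfin]
  ring
end

section
/- Pricing of convex payoffs via call prices: let dF be a positive measure on [0,∞) with finite mean m̄, and let g be convex on an open interval containing [0,∞) with g ∈ L¹(dF). Then ∫_{[0,∞)} g dF = g(0)·F(∞) + D⁺g(0)·m̄ + ∫_{(0,∞)} C(k) dm(k), where C(k) = ∫ (x−k)⁺ dF(x) and m is the second-derivative measure of g (the Lebesgue–Stieltjes measure of D⁺g). -/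
open MeasureTheory Set ENNReal

lemma gp_mono {c : ℝ} {g g' : ℝ → ℝ} (hg : ConvexOn ℝ (Set.Ioi c) g)
    (hg' : ∀ x ∈ Set.Ioi c, HasDerivWithinAt g (g' x) (Set.Ioi x) x) :
    MonotoneOn g' (Set.Ioi c) := by
  intro a ha b hb hab
  rcases eq_or_lt_of_le hab with rfl | h
  · exact le_refl _
  have h1 : g' a ≤ slope g a b := hg.le_slope_of_hasDerivWithinAt_Ioi ha hb h (hg' a ha)
  have h2 : slope g a b ≤ g' b := by
    apply ge_of_tendsto ((hasDerivWithinAt_iff_tendsto_slope' notMem_Ioi_self).mp (hg' b hb))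
    filter_upwards [self_mem_nhdsWithin] with y (hy : y ∈ Set.Ioi b)
    rw [slope_def_field, slope_def_field]
    exact hg.slope_mono_adjacent ha (Set.mem_Ioi.mpr (lt_trans (Set.mem_Ioi.mp hb) (Set.mem_Ioi.mp hy))) h hy
  linarith

lemma gp_ftc {c : ℝ} {g g' : ℝ → ℝ} (hc : c < 0) (hg : ConvexOn ℝ (Set.Ioi c) g)
    (hg' : ∀ x ∈ Set.Ioi c, HasDerivWithinAt g (g' x) (Set.Ioi x) x)
    {x : ℝ} (hx : 0 ≤ x) :
    ∫ t in (0:ℝ)..x, g' t = g x - g 0 := by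
  have hsub : Set.Icc (0:ℝ) x ⊆ Set.Ioi c := fun t ht => lt_of_lt_of_le hc ht.1
  apply intervalIntegral.integral_eq_sub_of_hasDeriv_right_of_le hx
  · exact (hg.continuousOn isOpen_Ioi).mono hsub
  · exact fun t ht => hg' t (hsub ⟨le_of_lt ht.1, le_of_lt ht.2⟩)
  · apply MonotoneOn.intervalIntegrable
    intro u hu v hv huv
    rw [Set.uIcc_of_le hx] at hu hv
    exact gp_mono hg hg' (hsub hu) (hsub hv) huv

lemma gp_intble {c : ℝ} {g g' : ℝ → ℝ} (hc : c < 0) (hg : ConvexOn ℝ (Set.Ioi c) g)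
    (hg' : ∀ x ∈ Set.Ioi c, HasDerivWithinAt g (g' x) (Set.Ioi x) x)
    {x : ℝ} (hx : 0 ≤ x) : IntervalIntegrable g' volume 0 x := by
  have hsub : Set.Icc (0:ℝ) x ⊆ Set.Ioi c := fun t ht => lt_of_lt_of_le hc ht.1
  apply MonotoneOn.intervalIntegrable
  intro u hu v hv huv
  rw [Set.uIcc_of_le hx] at hu hv
  exact gp_mono hg hg' (hsub hu) (hsub hv) huv

lemma gp_pointwise {c : ℝ} {g g' : ℝ → ℝ} (hc : c < 0) (hg : ConvexOn ℝ (Set.Ioi c) g)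
    (hg' : ∀ x ∈ Set.Ioi c, HasDerivWithinAt g (g' x) (Set.Ioi x) x)
    (m : Measure ℝ)
    (hm : ∀ a b : ℝ, a ∈ Set.Ioi c → a ≤ b →
      m (Set.Ioc a b) = ENNReal.ofReal (g' b - g' a))
    {x : ℝ} (hx : 0 ≤ x) :
    ∫⁻ k in Set.Ioi (0:ℝ), ENNReal.ofReal (max (x - k) 0) ∂m
      = ENNReal.ofReal (g x - g 0 - g' 0 * x) := by
  have h0c : (0:ℝ) ∈ Set.Ioi c := hc
  have hsub : Set.Icc (0:ℝ) x ⊆ Set.Ioi c := fun t ht => lt_of_lt_of_le hc ht.1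
  -- split the domain
  rw [← Set.Ioc_union_Ioi_eq_Ioi hx,
    lintegral_union measurableSet_Ioi Set.Ioc_disjoint_Ioi_same]
  have htail : ∫⁻ k in Set.Ioi x, ENNReal.ofReal (max (x - k) 0) ∂m = 0 := by
    rw [setLIntegral_congr_fun measurableSet_Ioi
      (fun k (hk : k ∈ Set.Ioi x) => ?_), lintegral_zero]
    rw [max_eq_right (by simp only [Set.mem_Ioi] at hk; linarith), ENNReal.ofReal_zero]
  rw [htail, add_zero]
  -- finite restricted measure
  set m₀ := m.restrict (Set.Ioc 0 x) with hm₀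
  haveI : IsFiniteMeasure m₀ := by
    constructor
    rw [hm₀, Measure.restrict_apply_univ, hm 0 x h0c hx]
    exact ENNReal.ofReal_lt_top
  -- rewrite integrand as Lebesgue measure of Ico
  have hstep1 : ∫⁻ k in Set.Ioc (0:ℝ) x, ENNReal.ofReal (max (x - k) 0) ∂m
      = ∫⁻ k, volume (Set.Ico k x) ∂m₀ := by
    apply setLIntegral_congr_fun measurableSet_Ioc ?_
    intro k hk
    beta_reduce
    rw [max_eq_left (by linarith [hk.2]), Real.volume_Ico]
  rw [hstep1]
  -- Tonelli
  set F : ℝ → ℝ → ℝ≥0∞ := fun k t => Set.indicator (Set.Ico k x) (fun _ => 1) t with hF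
  have hFmeas : Measurable (Function.uncurry F) := by
    have : Function.uncurry F
        = fun p : ℝ × ℝ => if p.1 ≤ p.2 ∧ p.2 < x then (1:ℝ≥0∞) else 0 := by
      funext p
      simp only [Function.uncurry, hF, Set.indicator, Set.mem_Ico]
    rw [this]
    exact Measurable.ite
      ((measurableSet_le measurable_fst measurable_snd).inter
        (measurableSet_lt measurable_snd measurable_const))
      measurable_const measurable_const
  have hvol : ∀ k, volume (Set.Ico k x) = ∫⁻ t, F k t ∂volume := by
    intro k
    rw [hF, lintegral_indicator measurableSet_Ico, setLIntegral_one]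
  calc ∫⁻ k, volume (Set.Ico k x) ∂m₀
      = ∫⁻ k, ∫⁻ t, F k t ∂volume ∂m₀ := lintegral_congr hvol
    _ = ∫⁻ t, ∫⁻ k, F k t ∂m₀ ∂volume := lintegral_lintegral_swap hFmeas.aemeasurable
    _ = ∫⁻ t, Set.indicator (Set.Ico 0 x)
          (fun t => ENNReal.ofReal (g' t - g' 0)) t ∂volume := by
        apply lintegral_congr
        intro t
        by_cases ht2 : x ≤ t
        · have hz : ∀ k, F k t = 0 := by
            intro k
            rw [hF]
            exact Set.indicator_of_notMem (fun h => absurd h.2 (not_lt.mpr ht2)) _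
          rw [lintegral_congr hz, lintegral_zero,
            Set.indicator_of_notMem (fun h => absurd h.2 (not_lt.mpr ht2)) _]
        · by_cases ht1 : 0 ≤ t
          · have ht : t ∈ Set.Ico 0 x := ⟨ht1, not_le.mp ht2⟩
            have hFt : ∀ k, F k t = Set.indicator (Set.Iic t) (fun _ => 1) k := by
              intro k
              simp only [hF, Set.indicator, Set.mem_Ico, Set.mem_Iic]
              by_cases hk : k ≤ t
              · rw [if_pos ⟨hk, ht.2⟩, if_pos hk]
              · rw [if_neg (fun h => hk h.1), if_neg hk]
            rw [lintegral_congr hFt, lintegral_indicator measurableSet_Iic, setLIntegral_one,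
              hm₀, Measure.restrict_apply measurableSet_Iic]
            have hIic : Set.Iic t ∩ Set.Ioc 0 x = Set.Ioc 0 t := by
              ext k
              simp only [Set.mem_inter_iff, Set.mem_Iic, Set.mem_Ioc]
              constructor
              · rintro ⟨h1, h2, _⟩; exact ⟨h2, h1⟩
              · rintro ⟨h1, h2⟩; exact ⟨h2, h1, h2.trans (le_of_lt ht.2)⟩
            rw [hIic, hm 0 t h0c ht1, Set.indicator_of_mem ht]
          · -- t < 0
            have hz : ∫⁻ k, F k t ∂m₀ = 0 := by
              rw [hm₀]
              rw [setLIntegral_congr_fun measurableSet_Ioc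
                (fun k (hk : k ∈ Set.Ioc 0 x) => ?_), lintegral_zero]
              rw [hF]
              exact Set.indicator_of_notMem
                (fun h => ht1 (le_trans (le_of_lt hk.1) h.1)) _
            rw [hz, Set.indicator_of_notMem (fun h => ht1 h.1) _]
    _ = ∫⁻ t in Set.Ico 0 x, ENNReal.ofReal (g' t - g' 0) ∂volume := by
        rw [lintegral_indicator measurableSet_Ico]
    _ = ENNReal.ofReal (∫ t in Set.Ico 0 x, (g' t - g' 0)) := by
        rw [← ofReal_integral_eq_lintegral_ofReal]
        · have h1 : IntegrableOn g' (Set.Ico 0 x) volume := by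
            have := (intervalIntegrable_iff_integrableOn_Icc_of_le hx).mp
              (gp_intble hc hg hg' hx)
            exact this.mono_set Set.Ico_subset_Icc_self
          exact h1.sub (integrableOn_const (μ := volume) (s := Set.Ico (0:ℝ) x) measure_Ico_lt_top.ne enorm_ne_top)
        · refine (ae_restrict_iff' measurableSet_Ico).mpr (ae_of_all _ fun t ht => ?_)
          have := gp_mono hg hg' h0c (hsub ⟨ht.1, le_of_lt ht.2⟩) ht.1
          simp only [Pi.zero_apply]
          linarith
    _ = ENNReal.ofReal (g x - g 0 - g' 0 * x) := by
        congr 1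
        rw [MeasureTheory.integral_Ico_eq_integral_Ioo, ← MeasureTheory.integral_Ioc_eq_integral_Ioo,
          ← intervalIntegral.integral_of_le hx,
          intervalIntegral.integral_sub (gp_intble hc hg hg' hx)
            intervalIntegrable_const,
          gp_ftc hc hg hg' hx, intervalIntegral.integral_const]
        simp
        ring

/-- Pricing of convex payoffs via call prices:
`∫ g dF = g(0)·F(∞) + D⁺g(0)·m̄ + ∫_{(0,∞)} C dm`, where `m` is the
second-derivative measure of the convex function `g`. -/
theorem convex_payoff_pricing (μ : Measure ℝ) [IsLocallyFiniteMeasure μ]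
    (hmean : Integrable (fun x => x) (μ.restrict (Set.Ici (0:ℝ))))
    (c : ℝ) (hc : c < 0)
    (g g' : ℝ → ℝ) (hg : ConvexOn ℝ (Set.Ioi c) g)
    (hg' : ∀ x ∈ Set.Ioi c, HasDerivWithinAt g (g' x) (Set.Ioi x) x)
    (hgInt : Integrable g (μ.restrict (Set.Ici (0:ℝ))))
    (m : Measure ℝ)
    (hm : ∀ a b : ℝ, a ∈ Set.Ioi c → a ≤ b →
      m (Set.Ioc a b) = ENNReal.ofReal (g' b - g' a))
    (C : ℝ → ℝ)
    (hC : ∀ k : ℝ, C k = ∫ x in Set.Ici (0:ℝ), max (x - k) 0 ∂μ) :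
    ∫ x in Set.Ici (0:ℝ), g x ∂μ
      = g 0 * (μ (Set.Ici (0:ℝ))).toReal
        + g' 0 * (∫ x in Set.Ici (0:ℝ), x ∂μ)
        + ∫ k in Set.Ioi (0:ℝ), C k ∂m := by
  have h0c : (0:ℝ) ∈ Set.Ioi c := hc
  -- μ is finite on [0,∞)
  have hIoi1 : μ (Set.Ioi 1) < ⊤ := by
    have hsub1 : Set.Ioi (1:ℝ) ⊆ Set.Ici 0 := fun y hy => Set.mem_Ici.mpr (le_trans zero_le_one (le_of_lt hy))
    have h1 : μ (Set.Ioi 1) = μ.restrict (Set.Ici 0) (Set.Ioi 1) := by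
      rw [Measure.restrict_apply measurableSet_Ioi, Set.inter_eq_left.mpr hsub1]
    have h2 : μ.restrict (Set.Ici 0) (Set.Ioi 1)
        ≤ ∫⁻ y in Set.Ioi 1, (‖y‖₊ : ℝ≥0∞) ∂(μ.restrict (Set.Ici 0)) := by
      rw [← setLIntegral_one]
      apply setLIntegral_mono' measurableSet_Ioi
      intro y hy
      have : (1:ℝ) ≤ ‖y‖ := le_trans (le_of_lt hy) (le_abs_self y)
      simpa using ENNReal.one_le_coe_iff.mpr (by exact_mod_cast this)
    have h3 := hmean.2
    rw [hasFiniteIntegral_def] at h3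
    exact lt_of_le_of_lt (h1 ▸ h2.trans (setLIntegral_le_lintegral _ _)) h3
  have hfin : μ (Set.Ici (0:ℝ)) < ⊤ := by
    calc μ (Set.Ici (0:ℝ)) ≤ μ (Set.Icc 0 1) + μ (Set.Ioi 1) := by
          rw [← Set.Icc_union_Ioi_eq_Ici zero_le_one]; exact measure_union_le _ _
      _ < ⊤ := ENNReal.add_lt_top.mpr ⟨isCompact_Icc.measure_lt_top, hIoi1⟩
  haveI : IsFiniteMeasure (μ.restrict (Set.Ici (0:ℝ))) :=
    ⟨by rw [Measure.restrict_apply_univ]; exact hfin⟩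
  -- m restricted to (0,∞) is σ-finite
  haveI hmsf : SigmaFinite (m.restrict (Set.Ioi (0:ℝ))) := by
    refine ⟨⟨⟨fun n : ℕ => Set.Iic (0:ℝ) ∪ Set.Ioc (0:ℝ) (n:ℝ), fun _ => trivial, fun n => ?_, ?_⟩⟩⟩
    · rw [Measure.restrict_apply (measurableSet_Iic.union measurableSet_Ioc)]
      have he : (Set.Iic (0:ℝ) ∪ Set.Ioc (0:ℝ) (n:ℝ)) ∩ Set.Ioi 0 = Set.Ioc (0:ℝ) (n:ℝ) := by
        ext y
        simp only [Set.mem_inter_iff, Set.mem_union, Set.mem_Iic, Set.mem_Ioc, Set.mem_Ioi]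
        constructor
        · rintro ⟨h1 | h1, h2⟩
          · linarith
          · exact h1
        · intro h; exact ⟨Or.inr h, h.1⟩
      rw [he, hm 0 (n:ℝ) h0c (Nat.cast_nonneg n)]
      exact ENNReal.ofReal_lt_top
    · ext y
      simp only [Set.mem_iUnion, Set.mem_union, Set.mem_Iic, Set.mem_Ioc, Set.mem_univ, iff_true]
      by_cases hy : y ≤ 0
      · exact ⟨0, Or.inl hy⟩
      · exact ⟨⌈y⌉₊, Or.inr ⟨not_le.mp hy, Nat.le_ceil y⟩⟩
  -- the nonnegative convex remainder
  set D : ℝ → ℝ := fun x => g x - g 0 - g' 0 * x with hD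
  have hDint : Integrable D (μ.restrict (Set.Ici (0:ℝ))) :=
    (hgInt.sub (integrable_const (g 0))).sub (hmean.const_mul (g' 0))
  have hDnn : 0 ≤ᵐ[μ.restrict (Set.Ici (0:ℝ))] D := by
    refine (ae_restrict_iff' measurableSet_Ici).mpr (ae_of_all _ fun x hx => ?_)
    have hx0 : (0:ℝ) ≤ x := hx
    have hlow : g' 0 * x ≤ ∫ t in (0:ℝ)..x, g' t := by
      have h1 : g' 0 * x = ∫ t in (0:ℝ)..x, g' 0 := by
        rw [intervalIntegral.integral_const]; simp [mul_comm]
      rw [h1]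
      apply intervalIntegral.integral_mono_on hx0 intervalIntegrable_const
        (gp_intble hc hg hg' hx0)
      intro t ht
      exact gp_mono hg hg' h0c (lt_of_lt_of_le hc ht.1) ht.1
    have hftc := gp_ftc hc hg hg' hx0
    simp only [hD, Pi.zero_apply]
    linarith
  -- integrability of the call payoffs
  have hCk_int : ∀ k : ℝ, Integrable (fun x => max (x - k) 0) (μ.restrict (Set.Ici (0:ℝ))) :=
    fun k => (hmean.sub (integrable_const k)).pos_part
  have hCnn : ∀ k, 0 ≤ C k := fun k => by
    rw [hC k]; exact integral_nonneg fun x => le_max_right _ 0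
  have hCanti : Antitone C := by
    intro k1 k2 hk
    rw [hC k1, hC k2]
    apply integral_mono (hCk_int k2) (hCk_int k1)
    intro x
    exact max_le_max (by linarith) le_rfl
  -- the key exchange identity
  have hKEY : ∫ k in Set.Ioi (0:ℝ), C k ∂m = ∫ x in Set.Ici (0:ℝ), D x ∂μ := by
    have hswap :
        ∫⁻ x in Set.Ici (0:ℝ), ∫⁻ k in Set.Ioi (0:ℝ),
            ENNReal.ofReal (max (x - k) 0) ∂m ∂μ
          = ∫⁻ k in Set.Ioi (0:ℝ), ∫⁻ x in Set.Ici (0:ℝ),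
              ENNReal.ofReal (max (x - k) 0) ∂μ ∂m := by
      apply lintegral_lintegral_swap
      apply Measurable.aemeasurable
      exact ((measurable_fst.sub measurable_snd).max measurable_const).ennreal_ofReal
    have hleft :
        ∫⁻ x in Set.Ici (0:ℝ), ∫⁻ k in Set.Ioi (0:ℝ),
            ENNReal.ofReal (max (x - k) 0) ∂m ∂μ
          = ENNReal.ofReal (∫ x in Set.Ici (0:ℝ), D x ∂μ) := by
      rw [ofReal_integral_eq_lintegral_ofReal hDint hDnn]
      apply setLIntegral_congr_fun measurableSet_Ici
      exact fun x hx => gp_pointwise hc hg hg' m hm hx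
    have hright :
        ∫⁻ k in Set.Ioi (0:ℝ), ∫⁻ x in Set.Ici (0:ℝ),
            ENNReal.ofReal (max (x - k) 0) ∂μ ∂m
          = ∫⁻ k in Set.Ioi (0:ℝ), ENNReal.ofReal (C k) ∂m := by
      apply setLIntegral_congr_fun measurableSet_Ioi
      refine fun k hk => ?_
      beta_reduce
      rw [hC k, ofReal_integral_eq_lintegral_ofReal (hCk_int k)
        (ae_of_all _ fun x => le_max_right _ 0)]
    have hInn : 0 ≤ ∫ x in Set.Ici (0:ℝ), D x ∂μ := integral_nonneg_of_ae hDnn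
    rw [integral_eq_lintegral_of_nonneg_ae (ae_of_all _ hCnn)
      hCanti.measurable.aestronglyMeasurable, ← hright, ← hswap, hleft,
      ENNReal.toReal_ofReal hInn]
  -- assemble
  have hsplit : ∫ x in Set.Ici (0:ℝ), g x ∂μ
      = (∫ x in Set.Ici (0:ℝ), D x ∂μ) + ((∫ x in Set.Ici (0:ℝ), g 0 ∂μ)
        + ∫ x in Set.Ici (0:ℝ), g' 0 * x ∂μ) := by
    have e1 : ∫ x in Set.Ici (0:ℝ), g x ∂μ
        = ∫ x in Set.Ici (0:ℝ), (D x + (g 0 + g' 0 * x)) ∂μ :=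
      integral_congr_ae (ae_of_all _ fun x => by simp only [hD]; ring)
    have hadd : Integrable (fun x => g 0 + g' 0 * x) (μ.restrict (Set.Ici (0:ℝ))) := by
      exact (integrable_const _).add (hmean.const_mul _)
    rw [e1, integral_add hDint hadd, integral_add (integrable_const _) (hmean.const_mul _)]
  rw [hsplit, hKEY, integral_const, integral_const_mul, measureReal_restrict_apply_univ, measureReal_def]
  simp only [smul_eq_mul]
  ring
end

section
/- Pricing of differences of convex payoffs: if g = h₁ − h₂ with h₁, h₂ convex on an open interval containing [0,∞) and h₁, h₂ ∈ L¹(dF), and ν is the signed Lebesgue–Stieltjes measure induced by D⁺h₁ − D⁺h₂, then ∫_{[0,∞)} g dF = g(0)·F(∞) + D⁺g(0)·m̄ + ∫_{(0,∞)} C dν. -/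
open MeasureTheory Set Filter ENNReal


lemma rderiv_monoOn {c : ℝ} {f f' : ℝ → ℝ} (hf : ConvexOn ℝ (Ioi c) f)
    (hd : ∀ x ∈ Ioi c, HasDerivWithinAt f (f' x) (Ioi x) x) :
    MonotoneOn f' (Ioi c) := by
  intro a ha b hb hab
  rcases eq_or_lt_of_le hab with rfl | h
  · exact le_rfl
  have h1 : f' a ≤ slope f a b := hf.le_slope_of_hasDerivWithinAt_Ioi ha hb h (hd a ha)
  have h2 : slope f a b ≤ f' b := by
    refine ge_of_tendsto ((hasDerivWithinAt_iff_tendsto_slope' (notMem_Ioi_self)).mp (hd b hb)) ?_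
    filter_upwards [self_mem_nhdsWithin] with t (ht : b < t)
    have ht' : t ∈ Ioi c := lt_trans (lt_trans ha.out h) ht
    have := hf.secant_mono hb ha ht' (ne_of_lt h) (ne_of_gt ht) (le_of_lt (lt_trans h ht))
    rw [slope_comm]
    simpa [slope_def_field] using this
  exact le_trans h1 h2

lemma ftc_conv {c : ℝ} {f f' : ℝ → ℝ} (hc : c < 0) (hf : ConvexOn ℝ (Ioi c) f)
    (hd : ∀ x ∈ Ioi c, HasDerivWithinAt f (f' x) (Ioi x) x) {b : ℝ} (hb : 0 ≤ b) :
    ∫ t in (0:ℝ)..b, f' t = f b - f 0 := by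
  have hsub : Icc (0:ℝ) b ⊆ Ioi c := fun x hx => lt_of_lt_of_le hc hx.1
  refine intervalIntegral.integral_eq_sub_of_hasDeriv_right_of_le hb
    ((hf.continuousOn isOpen_Ioi).mono hsub)
    (fun x hx => hd x (hsub ⟨le_of_lt hx.1, le_of_lt hx.2⟩)) ?_
  have : MonotoneOn f' (uIcc 0 b) :=
    (rderiv_monoOn hf hd).mono (by rw [uIcc_of_le hb]; exact hsub)
  exact this.intervalIntegrable


lemma key_repr {c : ℝ} {f f' : ℝ → ℝ} (hc : c < 0) (hf : ConvexOn ℝ (Ioi c) f)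
    (hd : ∀ x ∈ Ioi c, HasDerivWithinAt f (f' x) (Ioi x) x) (m : Measure ℝ)
    (hm : ∀ a b : ℝ, a ∈ Ioi c → a ≤ b → m (Ioc a b) = ENNReal.ofReal (f' b - f' a))
    {x : ℝ} (hx : 0 ≤ x) :
    ∫⁻ k in Ioi 0, ENNReal.ofReal (max (x - k) 0) ∂m
      = ENNReal.ofReal (f x - f 0 - f' 0 * x) := by
  have h0 : (0:ℝ) ∈ Ioi c := hc
  have hmono := rderiv_monoOn hf hd
  have layer := lintegral_eq_lintegral_meas_le (f := fun k => max (x - k) 0) (m.restrict (Ioi 0))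
    (Eventually.of_forall (fun k => le_max_right _ _))
    ((continuous_const.sub continuous_id).max continuous_const).measurable.aemeasurable
  rw [layer]
  have hset : ∀ t : ℝ, 0 < t →
      (m.restrict (Ioi 0)) {k : ℝ | t ≤ max (x - k) 0}
        = (if t ≤ x then ENNReal.ofReal (f' (x - t) - f' 0) else 0) := by
    intro t ht
    have hEq : {k : ℝ | t ≤ max (x - k) 0} = Iic (x - t) := by
      ext k
      simp only [mem_setOf_eq, mem_Iic, le_max_iff]
      constructor
      · rintro (h | h)
        · linarith
        · linarith
      · intro h; left; linarith
    rw [hEq, Measure.restrict_apply measurableSet_Iic]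
    by_cases hcase : t ≤ x
    · have : Iic (x - t) ∩ Ioi 0 = Ioc 0 (x - t) := by
        ext k; simp only [mem_inter_iff, mem_Iic, mem_Ioi, mem_Ioc]; tauto
      rw [this, hm 0 (x - t) h0 (by linarith), if_pos hcase]
    · have : Iic (x - t) ∩ Ioi 0 = (∅ : Set ℝ) := by
        ext k; simp only [mem_inter_iff, mem_Iic, mem_Ioi, mem_empty_iff_false, iff_false,
          not_and]
        intro h; linarith
      rw [this, measure_empty, if_neg hcase]
  rw [setLIntegral_congr_fun measurableSet_Ioi
    (fun t ht => hset t ht)]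
  have hsplit : Ioc (0:ℝ) x ∪ Ioi x = Ioi 0 := Ioc_union_Ioi_eq_Ioi hx
  rw [← hsplit, lintegral_union measurableSet_Ioi Ioc_disjoint_Ioi_same]
  have hz : ∫⁻ t in Ioi x, (if t ≤ x then ENNReal.ofReal (f' (x - t) - f' 0) else 0) = 0 := by
    rw [setLIntegral_congr_fun measurableSet_Ioi
      (fun t (ht : x < t) => if_neg (not_le.mpr ht))]
    simp
  rw [hz, add_zero]
  rw [setLIntegral_congr_fun measurableSet_Ioc
    (fun t (ht : t ∈ Ioc 0 x) => if_pos ht.2)]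
  -- now compute ∫⁻ t in Ioc 0 x, ofReal (f' (x-t) - f' 0)
  have hii : IntervalIntegrable f' volume 0 x :=
    (hmono.mono (by rw [uIcc_of_le hx]; exact fun y hy => lt_of_lt_of_le hc hy.1)).intervalIntegrable
  have hii1 : IntervalIntegrable (fun t => f' (x - t)) volume 0 x := by
    refine AntitoneOn.intervalIntegrable ?_
    intro s hs t ht hst
    rw [uIcc_of_le hx] at hs ht
    exact hmono (show x - t ∈ Ioi c by simp only [mem_Ioi]; linarith [ht.2])
      (show x - s ∈ Ioi c by simp only [mem_Ioi]; linarith [hs.2]) (by linarith)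
  have hii2 : IntervalIntegrable (fun t => f' (x - t) - f' 0) volume 0 x :=
    hii1.sub intervalIntegrable_const
  have hInt : IntegrableOn (fun t => f' (x - t) - f' 0) (Ioc 0 x) volume :=
    (intervalIntegrable_iff_integrableOn_Ioc_of_le hx).mp hii2
  have hnn : 0 ≤ᵐ[volume.restrict (Ioc 0 x)] fun t => f' (x - t) - f' 0 := by
    filter_upwards [ae_restrict_mem measurableSet_Ioc] with t ht
    have : f' 0 ≤ f' (x - t) := hmono h0
      (show x - t ∈ Ioi c by simp only [mem_Ioi]; linarith [ht.2]) (by linarith [ht.2])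
    simp only [Pi.zero_apply]
    linarith
  rw [← ofReal_integral_eq_lintegral_ofReal hInt hnn]
  congr 1
  rw [← intervalIntegral.integral_of_le hx]
  have hcomp := intervalIntegral.integral_comp_sub_left (a := 0) (b := x)
    (fun s => f' s - f' 0) x
  simp only [sub_self, sub_zero] at hcomp
  rw [hcomp, intervalIntegral.integral_sub hii intervalIntegrable_const,
    ftc_conv hc hf hd hx]
  simp [intervalIntegral.integral_const]
  ring


lemma glue {c : ℝ} {f f' : ℝ → ℝ} (hc : c < 0) (hf : ConvexOn ℝ (Ioi c) f)
    (hd : ∀ x ∈ Ioi c, HasDerivWithinAt f (f' x) (Ioi x) x)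
    (μ : Measure ℝ)
    (hmean : Integrable (fun x => x) (μ.restrict (Ici 0)))
    (hμ : μ (Ici 0) ≠ ⊤)
    (m : Measure ℝ)
    (hm : ∀ a b : ℝ, a ∈ Ioi c → a ≤ b → m (Ioc a b) = ENNReal.ofReal (f' b - f' a))
    (C : ℝ → ℝ) (hC : ∀ k : ℝ, C k = ∫ x in Ici (0:ℝ), max (x - k) 0 ∂μ) :
    ∫ k in Ioi (0:ℝ), C k ∂m = ∫ x in Ici (0:ℝ), (f x - f 0 - f' 0 * x) ∂μ := by
  have h0 : (0:ℝ) ∈ Ioi c := hc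
  have hfin : IsFiniteMeasure (μ.restrict (Ici 0)) :=
    ⟨by rwa [Measure.restrict_apply_univ, lt_top_iff_ne_top]⟩
  have hIntMax : ∀ k : ℝ, Integrable (fun x => max (x - k) 0) (μ.restrict (Ici 0)) := by
    intro k
    exact (hmean.sub (integrable_const k)).sup (integrable_const 0)
  have hCnn : ∀ k, 0 ≤ C k := by
    intro k; rw [hC k]; exact integral_nonneg fun x => le_max_right _ _
  have hCanti : Antitone C := by
    intro k k' hkk'
    rw [hC k, hC k']
    refine integral_mono (hIntMax k') (hIntMax k) fun x => ?_
    exact max_le_max (by simp; linarith) le_rfl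
  have hCmeas : Measurable C := hCanti.measurable
  have hsf : SigmaFinite (m.restrict (Ioi 0)) := by
    refine ⟨⟨⟨fun n => Iic (n:ℝ), fun _ => trivial, fun n => ?_, ?_⟩⟩⟩
    · rw [Measure.restrict_apply measurableSet_Iic]
      have : Iic ((n:ℕ):ℝ) ∩ Ioi 0 = Ioc 0 (n:ℝ) := by
        ext y; simp only [mem_inter_iff, mem_Iic, mem_Ioi, mem_Ioc]; tauto
      rw [this, hm 0 n h0 (Nat.cast_nonneg n)]
      exact ENNReal.ofReal_lt_top
    · refine eq_univ_of_forall fun y => mem_iUnion.2 ?_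
      obtain ⟨n, hn⟩ := exists_nat_ge y
      exact ⟨n, hn⟩
  have hGnn : ∀ x ∈ Ici (0:ℝ), 0 ≤ f x - f 0 - f' 0 * x := by
    intro x hx
    rcases eq_or_lt_of_le (mem_Ici.mp hx) with rfl | hx0
    · simp
    · have hx' : x ∈ Ioi c := lt_trans hc hx0
      have := hf.le_slope_of_hasDerivWithinAt_Ioi h0 hx' hx0 (hd 0 h0)
      rw [slope_def_field] at this
      have := (le_div_iff₀ hx0).mp (by simpa using this)
      linarith
  have hGmeas : AEStronglyMeasurable (fun x => f x - f 0 - f' 0 * x)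
      (μ.restrict (Ici 0)) := by
    have hcf : ContinuousOn f (Ici (0:ℝ)) :=
      (hf.continuousOn isOpen_Ioi).mono (fun y hy => lt_of_lt_of_le hc hy)
    exact ((hcf.aestronglyMeasurable measurableSet_Ici).sub aestronglyMeasurable_const).sub
      ((aestronglyMeasurable_const.mul (aestronglyMeasurable_id)))
  -- lintegral identity
  have hlin : ∫⁻ k in Ioi (0:ℝ), ENNReal.ofReal (C k) ∂m
      = ∫⁻ x in Ici (0:ℝ), ENNReal.ofReal (f x - f 0 - f' 0 * x) ∂μ := by
    have step1 : ∫⁻ k in Ioi (0:ℝ), ENNReal.ofReal (C k) ∂m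
        = ∫⁻ k in Ioi (0:ℝ), ∫⁻ x in Ici (0:ℝ), ENNReal.ofReal (max (x - k) 0) ∂μ ∂m := by
      refine lintegral_congr fun k => ?_
      rw [hC k, ofReal_integral_eq_lintegral_ofReal (hIntMax k)
        (Eventually.of_forall fun x => le_max_right _ _)]
    rw [step1]
    have hswap := lintegral_lintegral_swap (μ := m.restrict (Ioi 0))
      (ν := μ.restrict (Ici 0))
      (f := fun k x => ENNReal.ofReal (max (x - k) 0)) ?_
    · rw [hswap]
      refine setLIntegral_congr_fun measurableSet_Ici (fun x hx => ?_)
      exact key_repr hc hf hd m hm hx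
    · exact (((measurable_snd.sub measurable_fst).max measurable_const).ennreal_ofReal).aemeasurable
  rw [integral_eq_lintegral_of_nonneg_ae (Eventually.of_forall fun k => hCnn k)
      hCmeas.aestronglyMeasurable.restrict,
    integral_eq_lintegral_of_nonneg_ae ?_ hGmeas, hlin]
  filter_upwards [ae_restrict_mem measurableSet_Ici] with x hx using hGnn x hx


/-- Pricing of differences of convex payoffs: if `g = h₁ − h₂` with `h₁, h₂`
convex and `dF`-integrable, and the signed Lebesgue–Stieltjes measure `ν` of
`D⁺h₁ − D⁺h₂` is realized as `m₁ − m₂`, then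
`∫ g dF = g(0)·F(∞) + D⁺g(0)·m̄ + ∫_{(0,∞)} C dν`. -/
theorem diff_convex_payoff_pricing (μ : Measure ℝ) [IsLocallyFiniteMeasure μ]
    (hmean : Integrable (fun x => x) (μ.restrict (Set.Ici (0:ℝ))))
    (c : ℝ) (hc : c < 0)
    (h₁ h₂ h₁' h₂' : ℝ → ℝ)
    (hh₁ : ConvexOn ℝ (Set.Ioi c) h₁) (hh₂ : ConvexOn ℝ (Set.Ioi c) h₂)
    (hd₁ : ∀ x ∈ Set.Ioi c, HasDerivWithinAt h₁ (h₁' x) (Set.Ioi x) x)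
    (hd₂ : ∀ x ∈ Set.Ioi c, HasDerivWithinAt h₂ (h₂' x) (Set.Ioi x) x)
    (hInt₁ : Integrable h₁ (μ.restrict (Set.Ici (0:ℝ))))
    (hInt₂ : Integrable h₂ (μ.restrict (Set.Ici (0:ℝ))))
    (m₁ m₂ : Measure ℝ)
    (hm₁ : ∀ a b : ℝ, a ∈ Set.Ioi c → a ≤ b →
      m₁ (Set.Ioc a b) = ENNReal.ofReal (h₁' b - h₁' a))
    (hm₂ : ∀ a b : ℝ, a ∈ Set.Ioi c → a ≤ b →
      m₂ (Set.Ioc a b) = ENNReal.ofReal (h₂' b - h₂' a))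
    (C : ℝ → ℝ)
    (hC : ∀ k : ℝ, C k = ∫ x in Set.Ici (0:ℝ), max (x - k) 0 ∂μ) :
    ∫ x in Set.Ici (0:ℝ), (h₁ x - h₂ x) ∂μ
      = (h₁ 0 - h₂ 0) * (μ (Set.Ici (0:ℝ))).toReal
        + (h₁' 0 - h₂' 0) * (∫ x in Set.Ici (0:ℝ), x ∂μ)
        + ((∫ k in Set.Ioi (0:ℝ), C k ∂m₁) - ∫ k in Set.Ioi (0:ℝ), C k ∂m₂) := by
  -- finiteness of μ (Ici 0)
  have hμfin : μ (Ici (0:ℝ)) ≠ ⊤ := by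
    have h1 : μ (Icc (0:ℝ) 1) < ⊤ := isCompact_Icc.measure_lt_top
    have h2 : μ (Ioi (1:ℝ)) < ⊤ := by
      have hb : μ (Ioi (1:ℝ)) ≤ ∫⁻ x in Ici (0:ℝ), ‖x‖₊ ∂μ := by
        calc μ (Ioi (1:ℝ)) = ∫⁻ _ in Ioi (1:ℝ), 1 ∂μ := by simp
          _ ≤ ∫⁻ x in Ioi (1:ℝ), ‖x‖₊ ∂μ := by
              refine setLIntegral_mono (measurable_nnnorm.coe_nnreal_ennreal) fun x hx => ?_
              have hx1 : (1:ℝ) ≤ x := le_of_lt hx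
              have : (↑‖x‖₊ : ℝ≥0∞) = ENNReal.ofReal x := by
                exact Real.enorm_eq_ofReal (by linarith)
              rw [this]
              exact ENNReal.one_le_ofReal.mpr hx1
          _ ≤ ∫⁻ x in Ici (0:ℝ), ‖x‖₊ ∂μ :=
              lintegral_mono_set (fun x hx => mem_Ici.mpr (le_of_lt (lt_of_le_of_lt zero_le_one hx)))
      exact lt_of_le_of_lt hb hmean.2
    have : μ (Ici (0:ℝ)) ≤ μ (Icc 0 1) + μ (Ioi 1) := by
      rw [← Icc_union_Ioi_eq_Ici (zero_le_one)]
      exact measure_union_le _ _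
    exact ne_top_of_le_ne_top (ENNReal.add_ne_top.mpr ⟨h1.ne, h2.ne⟩) this
  have hfin : IsFiniteMeasure (μ.restrict (Ici 0)) :=
    ⟨by rwa [Measure.restrict_apply_univ, lt_top_iff_ne_top]⟩
  have hIG₁ : Integrable (fun x => h₁ x - h₁ 0 - h₁' 0 * x) (μ.restrict (Ici 0)) :=
    (hInt₁.sub (integrable_const _)).sub (hmean.const_mul _)
  have hIG₂ : Integrable (fun x => h₂ x - h₂ 0 - h₂' 0 * x) (μ.restrict (Ici 0)) :=
    (hInt₂.sub (integrable_const _)).sub (hmean.const_mul _)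
  have e₁ := glue hc hh₁ hd₁ μ hmean hμfin m₁ hm₁ C hC
  have e₂ := glue hc hh₂ hd₂ μ hmean hμfin m₂ hm₂ C hC
  have hsplit : (fun x => h₁ x - h₂ x)
      = fun x => ((h₁ 0 - h₂ 0) + (h₁' 0 - h₂' 0) * x)
          + ((h₁ x - h₁ 0 - h₁' 0 * x) - (h₂ x - h₂ 0 - h₂' 0 * x)) := by
    funext x; ring
  have ha : Integrable (fun x => (h₁ 0 - h₂ 0) + (h₁' 0 - h₂' 0) * x)
      (μ.restrict (Ici 0)) := (integrable_const _).add (hmean.const_mul _)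
  have hg : Integrable
      (fun x => (h₁ x - h₁ 0 - h₁' 0 * x) - (h₂ x - h₂ 0 - h₂' 0 * x))
      (μ.restrict (Ici 0)) := hIG₁.sub hIG₂
  rw [hsplit, integral_add ha hg, integral_add (integrable_const _) (hmean.const_mul _),
    integral_sub hIG₁ hIG₂, integral_const, integral_const_mul,
    measureReal_restrict_apply_univ, measureReal_def, smul_eq_mul, e₁, e₂]
  ring
end

section
/- If dF has finite mean and g ∈ L¹(dF) is absolutely continuous on [0,∞) with increasing derivative g' (a.e.), then lim_{a→∞} g'(a) · ∫_a^∞ (F(∞) − F(y)) dy = 0; equivalently lim_{a→∞} C(a)·g'(a) = 0. -/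
/-!
Since `g'` is increasing, `g` lies above its tangents: `g'(a) (x - a) ≤ g x - g a` for
`0 ≤ a ≤ x`, and in particular `g a ≥ g 0 + g'(0) a`. Together with `g'(a) ≥ g'(0)` this gives
`|g'(a) (x - a)| ≤ |g x| + |g 0| + |g'(0)| x`, a `dF`-integrable majorant. By the layer-cake
formula `C(a) = ∫_{x > a} (x - a) dF(x)`, so `|g'(a) C(a)|` is bounded by the tail over `(a, ∞)`
of the integral of that majorant, which tends to `0`.
-/

open MeasureTheory Set Filter Topology ENNReal

theorem measure_Ici_lt_top_of_integrableOn_id {μ : Measure ℝ} [IsLocallyFiniteMeasure μ]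
    {c : ℝ} (h : IntegrableOn (fun x => x) (Ici c) μ) : μ (Ici c) < ∞ := by
  have hIoi : IntegrableOn (fun _ => (1 : ℝ)) (Ici c ∩ Ioi 1) μ := by
    refine Integrable.mono' (h.mono_set inter_subset_left) (by fun_prop) ?_
    filter_upwards [ae_restrict_mem (measurableSet_Ici.inter measurableSet_Ioi)] with x hx
    simpa using hx.2.le
  have hIcc : IntegrableOn (fun _ => (1 : ℝ)) (Icc c 1) μ :=
    integrableOn_const isCompact_Icc.measure_lt_top.ne
  have hcover : Ici c ⊆ Icc c 1 ∪ (Ici c ∩ Ioi 1) := fun x hx => by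
    rcases le_or_gt x 1 with h1 | h1
    · exact Or.inl ⟨hx, h1⟩
    · exact Or.inr ⟨hx, h1⟩
  simpa using (hIcc.union hIoi).mono_set hcover

theorem tendsto_setIntegral_Ioi_atTop {μ : Measure ℝ} {f : ℝ → ℝ} {c : ℝ}
    (hf : IntegrableOn f (Ioi c) μ) :
    Tendsto (fun a => ∫ x in Ioi a, f x ∂μ) atTop (𝓝 0) := by
  have hempty : (⋂ a : ℝ, Ioi a) = ∅ := iInter_eq_empty_iff.2 fun x => ⟨x, lt_irrefl x⟩
  simpa [hempty] using tendsto_setIntegral_of_antitone (μ := μ) (f := f)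
    (fun _ => measurableSet_Ioi) (fun _ _ h => Ioi_subset_Ioi h) ⟨c, hf⟩

theorem toReal_measure_Ici_sub_toReal_measure_Icc {μ : Measure ℝ} {c y : ℝ}
    (h : μ (Ici c) ≠ ∞) (hy : c ≤ y) :
    (μ (Ici c)).toReal - (μ (Icc c y)).toReal = (μ (Ioi y)).toReal := by
  have hsub : ∀ s ⊆ Ici c, μ s ≠ ∞ := fun s hs => ne_top_of_le_ne_top h (measure_mono hs)
  change μ.real _ - μ.real _ = μ.real _
  rw [← Icc_union_Ioi_eq_Ici hy,
    measureReal_union ((Iic_disjoint_Ioi le_rfl).mono_left Icc_subset_Iic_self)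
      measurableSet_Ioi (hsub _ Icc_subset_Ici_self) (hsub _ (Ioi_subset_Ici hy))]
  ring

theorem setIntegral_Ioi_toReal_measure_Ioi (μ : Measure ℝ) {a : ℝ} (ha : μ (Ioi a) ≠ ∞) :
    ∫ y in Ioi a, (μ (Ioi y)).toReal = ∫ x in Ioi a, (x - a) ∂μ := by
  have hnonneg : 0 ≤ᵐ[μ.restrict (Ioi a)] fun x => x - a := by
    filter_upwards [ae_restrict_mem measurableSet_Ioi] with x hx
    exact sub_nonneg.2 hx.le
  have hfin : ∀ᵐ y ∂(volume.restrict (Ioi a)), μ (Ioi y) < ∞ := by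
    filter_upwards [ae_restrict_mem measurableSet_Ioi] with y hy
    exact (measure_mono (Ioi_subset_Ioi hy.le)).trans_lt ha.lt_top
  have hmeas : Measurable fun y : ℝ => μ (Ioi y) :=
    Antitone.measurable fun _ _ h => measure_mono (Ioi_subset_Ioi h)
  rw [integral_toReal hmeas.aemeasurable hfin,
    integral_eq_lintegral_of_nonneg_ae hnonneg (by fun_prop),
    lintegral_eq_lintegral_meas_lt _ hnonneg (by fun_prop),
    ← (measurePreserving_add_right volume a).setLIntegral_comp_preimage_emb
      (measurableEmbedding_addRight a), preimage_add_const_Ioi, sub_self]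
  congr 1
  refine setLIntegral_congr_fun measurableSet_Ioi fun t (ht : 0 < t) => ?_
  rw [Measure.restrict_apply' measurableSet_Ioi]
  congr 1
  ext x
  simp only [mem_Ioi, mem_inter_iff, mem_ofPred_eq]
  constructor
  · intro hx
    constructor <;> linarith
  · intro hx
    linarith

section Primitive

variable {g g' : ℝ → ℝ} {c a x : ℝ}

theorem sub_eq_intervalIntegral_of_monotoneOn (hmono : MonotoneOn g' (Ici c))
    (hac : ∀ x, c ≤ x → g x = g c + ∫ t in c..x, g' t) (ha : c ≤ a) (hax : a ≤ x) :
    g x - g a = ∫ t in a..x, g' t := by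
  have hint : ∀ y, c ≤ y → IntervalIntegrable g' volume c y := fun y hy =>
    (hmono.mono (by simp [uIcc_of_le hy, Icc_subset_Ici_self])).intervalIntegrable
  rw [hac x (ha.trans hax), hac a ha,
    ← intervalIntegral.integral_interval_sub_left (hint x (ha.trans hax)) (hint a ha)]
  ring

theorem mul_sub_le_sub_of_monotoneOn (hmono : MonotoneOn g' (Ici c))
    (hac : ∀ x, c ≤ x → g x = g c + ∫ t in c..x, g' t) (ha : c ≤ a) (hax : a ≤ x) :
    g' a * (x - a) ≤ g x - g a := by
  have hmono' : MonotoneOn g' (uIcc a x) :=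
    hmono.mono fun t ht => ha.trans (uIcc_of_le hax ▸ ht).1
  rw [sub_eq_intervalIntegral_of_monotoneOn hmono hac ha hax]
  calc g' a * (x - a) = ∫ _ in a..x, g' a := by simp [mul_comm]
    _ ≤ ∫ t in a..x, g' t :=
      intervalIntegral.integral_mono_on hax intervalIntegrable_const hmono'.intervalIntegrable
        fun t ht => hmono' left_mem_uIcc (uIcc_of_le hax ▸ ht) ht.1

theorem abs_mul_sub_le_of_monotoneOn (hmono : MonotoneOn g' (Ici c))
    (hac : ∀ x, c ≤ x → g x = g c + ∫ t in c..x, g' t) (ha : c ≤ a) (hax : a ≤ x) :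
    |g' a * (x - a)| ≤ |g x| + |g c| + |g' c| * (x - c) := by
  have tangent_a := mul_sub_le_sub_of_monotoneOn hmono hac ha hax
  have tangent_c := mul_sub_le_sub_of_monotoneOn hmono hac le_rfl ha
  have slope : g' c * (x - a) ≤ g' a * (x - a) :=
    mul_le_mul_of_nonneg_right (hmono self_mem_Ici ha ha) (sub_nonneg.2 hax)
  have hxa := sub_nonneg.2 hax
  have hca := sub_nonneg.2 ha
  rw [abs_le]
  constructor
  · nlinarith [mul_le_mul_of_nonneg_right (neg_abs_le (g' c)) hxa,
      mul_nonneg (abs_nonneg (g' c)) hca, abs_nonneg (g x), abs_nonneg (g c)]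
  · nlinarith [mul_le_mul_of_nonneg_right (neg_abs_le (g' c)) hca,
      mul_nonneg (abs_nonneg (g' c)) hxa, le_abs_self (g x), neg_abs_le (g c)]

end Primitive

/-- If `dF` has finite mean and `g ∈ L¹(dF)` is absolutely continuous with
increasing derivative `g'`, then `g'(a) · ∫_a^∞ (F(∞) − F(y)) dy → 0` as
`a → ∞`, i.e. `C(a)·g'(a) → 0`. -/
theorem deriv_times_call_tail (μ : Measure ℝ) [IsLocallyFiniteMeasure μ]
    (hmean : Integrable (fun x => x) (μ.restrict (Set.Ici (0:ℝ))))
    (g g' : ℝ → ℝ)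
    (hmono : MonotoneOn g' (Set.Ici (0:ℝ)))
    (hac : ∀ x : ℝ, 0 ≤ x → g x = g 0 + ∫ t in (0:ℝ)..x, g' t)
    (hg : Integrable g (μ.restrict (Set.Ici (0:ℝ)))) :
    Tendsto
      (fun a => g' a *
        ∫ y in Set.Ioi a, ((μ (Set.Ici (0:ℝ))).toReal - (μ (Set.Icc 0 y)).toReal))
      atTop (nhds 0) := by
  have hfin : μ (Ici 0) ≠ ∞ := (measure_Ici_lt_top_of_integrableOn_id hmean).ne
  have hmajorant : IntegrableOn (fun x => |g x| + |g 0| + |g' 0| * (x - 0)) (Ici 0) μ :=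
    (hg.abs.add (integrableOn_const hfin)).add
      ((hmean.sub (integrableOn_const hfin)).const_mul _)
  refine squeeze_zero_norm' ?_
    (tendsto_setIntegral_Ioi_atTop (hmajorant.mono_set Ioi_subset_Ici_self))
  filter_upwards [eventually_ge_atTop 0] with a ha
  have hlayercake : ∫ y in Ioi a, ((μ (Ici 0)).toReal - (μ (Icc 0 y)).toReal)
      = ∫ x in Ioi a, (x - a) ∂μ := by
    rw [← setIntegral_Ioi_toReal_measure_Ioi μ
      (ne_top_of_le_ne_top hfin (measure_mono (Ioi_subset_Ici ha)))]
    exact setIntegral_congr_fun measurableSet_Ioi fun y hy =>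
      toReal_measure_Ici_sub_toReal_measure_Icc hfin (ha.trans hy.le)
  rw [hlayercake, ← integral_const_mul]
  refine norm_integral_le_of_norm_le (hmajorant.mono_set (Ioi_subset_Ici ha)) ?_
  filter_upwards [ae_restrict_mem measurableSet_Ioi] with x hx
  exact abs_mul_sub_le_of_monotoneOn hmono hac ha hx.le
end

section
/- Localized pricing formula: let dF have finite mean, g₀ convex on ℝ, 0 ≤ a < b, and g := g₀·1_{[a,b)}. Then ∫_{(a,b)} g dF = ∫_{(a,b)} C dm + C(a)·D⁺g₀(a) − D⁺C(a)·g₀(a) − C(b)·D⁺g₀(b−) + D⁺C(b−)·g₀(b−), where m is the second-derivative measure of g₀, C(k) = ∫ (x−k)⁺ dF(x), and D⁺C(x) = F(x) − F(∞). -/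
open MeasureTheory Set Filter Topology ENNReal

section Helpers

variable {g₀ g' : ℝ → ℝ} (hg : ConvexOn ℝ Set.univ g₀)
  (hg' : ∀ x : ℝ, HasDerivWithinAt g₀ (g' x) (Set.Ioi x) x)

include hg in
lemma rightd_le_slope (hg'' : ∀ x : ℝ, HasDerivWithinAt g₀ (g' x) (Set.Ioi x) x)
    {u v : ℝ} (huv : u < v) : g' u ≤ (g₀ v - g₀ u) / (v - u) := by
  have := hg.le_slope_of_hasDerivWithinAt_Ioi (mem_univ u) (mem_univ v) huv (hg'' u)
  rwa [slope_def_field] at this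

include hg hg' in
lemma slope_le_rightd {u v : ℝ} (huv : u < v) : (g₀ v - g₀ u) / (v - u) ≤ g' v := by
  have h := (hasDerivWithinAt_iff_tendsto_slope' (notMem_Ioi.2 le_rfl)).mp (hg' v)
  refine ge_of_tendsto h ?_
  rw [eventually_nhdsWithin_iff]
  filter_upwards [eventually_gt_nhds huv] with w hw (hw' : v < w)
  rw [slope_def_field]
  exact hg.slope_mono_adjacent (mem_univ u) (mem_univ w) huv hw'

include hg hg' in
lemma gp_mono_s17 : Monotone g' := by
  intro u v huv
  rcases huv.eq_or_lt with rfl | h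
  · exact le_rfl
  · exact (rightd_le_slope hg hg' h).trans (slope_le_rightd hg hg' h)

include hg hg' in
lemma ftc_g {u v : ℝ} (huv : u ≤ v) : ∫ t in u..v, g' t = g₀ v - g₀ u :=
  intervalIntegral.integral_eq_sub_of_hasDeriv_right_of_le huv
    (hg.locallyLipschitz.continuous.continuousOn) (fun t _ => hg' t)
    ((gp_mono_s17 hg hg').intervalIntegrable)

include hg hg' in
lemma gl_tendsto {b gl : ℝ} (hgl : HasDerivWithinAt g₀ gl (Set.Iio b) b) :
    Tendsto g' (𝓝[<] b) (𝓝 gl) := by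
  have hub : ∀ v : ℝ, v < b → g' v ≤ gl := by
    intro v hvb
    refine (rightd_le_slope hg hg' hvb).trans ?_
    have := hg.slope_le_of_hasDerivWithinAt_Iio (mem_univ v) (mem_univ b) hvb hgl
    rwa [slope_def_field] at this
  refine tendsto_order.2 ⟨?_, ?_⟩
  · intro c hc
    have h := (hasDerivWithinAt_iff_tendsto_slope' (notMem_Iio.2 le_rfl)).mp hgl
    obtain ⟨u, hcu, hub'⟩ :=
      ((h.eventually (eventually_gt_nhds hc)).and self_mem_nhdsWithin).exists
    have hu : u < b := hub'
    have hslope : c < (g₀ b - g₀ u) / (b - u) := by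
      rw [slope_def_field] at hcu
      have heq : (g₀ u - g₀ b) / (u - b) = (g₀ b - g₀ u) / (b - u) := by
        rw [← neg_div_neg_eq]; ring_nf
      rwa [heq] at hcu
    have hcont : Tendsto (fun v => (g₀ v - g₀ u) / (v - u)) (𝓝 b)
        (𝓝 ((g₀ b - g₀ u) / (b - u))) := by
      have hgc : Continuous g₀ := hg.locallyLipschitz.continuous
      exact ((hgc.tendsto b).sub tendsto_const_nhds).div
        ((continuous_id.tendsto b).sub tendsto_const_nhds)
        (by intro h0; linarith [sub_eq_zero.mp h0])
    have hev1 : ∀ᶠ v in 𝓝[<] b, c < (g₀ v - g₀ u) / (v - u) :=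
      ((hcont.eventually (eventually_gt_nhds hslope)).filter_mono nhdsWithin_le_nhds)
    have hev2 : ∀ᶠ v in 𝓝[<] b, u < v :=
      ((eventually_gt_nhds hu).filter_mono nhdsWithin_le_nhds)
    filter_upwards [hev1, hev2] with v h1 h2
    exact h1.trans_le (slope_le_rightd hg hg' h2)
  · intro c hc
    rw [eventually_nhdsWithin_iff]
    exact Eventually.of_forall fun v hv => (hub v hv).trans_lt hc

include hg hg' in
lemma m_Ioo (m : Measure ℝ)
    (hm : ∀ u v : ℝ, u ≤ v → m (Ioc u v) = ENNReal.ofReal (g' v - g' u))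
    {a b gl : ℝ} (hab : a < b) (hgl : HasDerivWithinAt g₀ gl (Set.Iio b) b) :
    m (Ioo a b) = ENNReal.ofReal (gl - g' a) := by
  set v : ℕ → ℝ := fun n => b - (b - a) / (n + 1) with hv
  have hba : (0:ℝ) < b - a := by linarith
  have hvlt : ∀ n, v n < b := by
    intro n
    have : (0:ℝ) < (b - a) / (n + 1) := div_pos hba (by positivity)
    simp only [hv]; linarith
  have hvge : ∀ n, a ≤ v n := by
    intro n
    have : (b - a) / ((n:ℝ) + 1) ≤ (b - a) / 1 := by
      apply div_le_div_of_nonneg_left hba.le one_pos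
      linarith [Nat.cast_nonneg (α := ℝ) n]
    simp only [hv]; simp at this ⊢; linarith
  have hvmono : Monotone v := by
    intro n k hnk
    have : (b - a) / ((k:ℝ) + 1) ≤ (b - a) / ((n:ℝ) + 1) := by
      apply div_le_div_of_nonneg_left hba.le (by positivity)
      have : (n:ℝ) ≤ (k:ℝ) := Nat.cast_le.2 hnk
      linarith
    simp only [hv]; linarith
  have hvtendsto : Tendsto v atTop (𝓝 b) := by
    have h0 : Tendsto (fun n : ℕ => (b - a) / ((n:ℝ) + 1)) atTop (𝓝 0) := by
      have := tendsto_const_div_atTop_nhds_zero_nat (b - a)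
      have h1 := this.comp (tendsto_add_atTop_nat 1)
      have : ((fun n : ℕ => (b - a) / (n:ℝ)) ∘ fun n => n + 1)
          = fun n : ℕ => (b - a) / ((n:ℝ) + 1) := by
        funext n; simp [Function.comp]
      rwa [this] at h1
    have := tendsto_const_nhds.sub h0 (α := ℕ) (f := fun _ : ℕ => b)
    simpa using this
  have hUnion : Ioo a b = ⋃ n, Ioc a (v n) := by
    ext y
    simp only [mem_Ioo, mem_iUnion, mem_Ioc]
    constructor
    · rintro ⟨hay, hyb⟩
      have : ∀ᶠ n in atTop, y < v n := hvtendsto.eventually (eventually_gt_nhds hyb)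
      obtain ⟨n, hn⟩ := this.exists
      exact ⟨n, hay, hn.le⟩
    · rintro ⟨n, hay, hyv⟩
      exact ⟨hay, hyv.trans_lt (hvlt n)⟩
  have hU : Tendsto (fun n => m (Ioc a (v n))) atTop (𝓝 (m (Ioo a b))) := by
    rw [hUnion]
    exact tendsto_measure_iUnion_atTop (fun n k hnk => Ioc_subset_Ioc_right (hvmono hnk))
  have hV : Tendsto (fun n => m (Ioc a (v n))) atTop (𝓝 (ENNReal.ofReal (gl - g' a))) := by
    have heq : (fun n => m (Ioc a (v n))) = fun n => ENNReal.ofReal (g' (v n) - g' a) := by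
      funext n; exact hm a (v n) (hvge n)
    rw [heq]
    have hglt : Tendsto (fun n => g' (v n)) atTop (𝓝 gl) := by
      refine (gl_tendsto hg hg' hgl).comp ?_
      exact tendsto_nhdsWithin_of_tendsto_nhds_of_eventually_within v hvtendsto
        (Eventually.of_forall fun n => hvlt n)
    exact (ENNReal.continuous_ofReal.tendsto _).comp (hglt.sub_const (g' a))
  exact tendsto_nhds_unique hU hV

end Helpers

section Key

variable {g₀ g' : ℝ → ℝ}

lemma keyC (hmono : Monotone g')
    (hftc : ∀ u v : ℝ, u ≤ v → ∫ t in u..v, g' t = g₀ v - g₀ u)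
    (m : Measure ℝ) (hm : ∀ u v : ℝ, u ≤ v → m (Ioc u v) = ENNReal.ofReal (g' v - g' u))
    {u x : ℝ} (hux : u ≤ x) :
    ∫ k in Ioc u x, (x - k) ∂m = g₀ x - g₀ u - g' u * (x - u) := by
  have hfin : m (Ioc u x) ≠ ⊤ := by rw [hm u x hux]; exact ENNReal.ofReal_ne_top
  haveI : IsFiniteMeasure (m.restrict (Ioc u x)) :=
    ⟨by rw [Measure.restrict_apply_univ]; exact hfin.lt_top⟩
  have h2 : g₀ x - g₀ u - g' u * (x - u) = ∫ t in Ioc u x, (g' t - g' u) := by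
    rw [← intervalIntegral.integral_of_le hux,
      intervalIntegral.integral_sub hmono.intervalIntegrable intervalIntegrable_const,
      hftc u x hux, intervalIntegral.integral_const, smul_eq_mul]
    ring
  have hMeas : Measurable (fun t => m (Ioc u t)) := by
    apply Monotone.measurable
    exact fun s t hst => measure_mono (Ioc_subset_Ioc_right hst)
  have h3 : ∫ t in Ioc u x, (g' t - g' u) =
      (∫⁻ t in Ioc u x, m (Ioc u t) ∂volume).toReal := by
    rw [← integral_toReal (hMeas.aemeasurable) ?_]
    · refine setIntegral_congr_fun measurableSet_Ioc fun t ht => ?_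
      rw [hm u t ht.1.le, ENNReal.toReal_ofReal (sub_nonneg.2 (hmono ht.1.le))]
    · filter_upwards [ae_restrict_mem measurableSet_Ioc] with t ht
      exact (measure_mono (Ioc_subset_Ioc_right ht.2)).trans_lt hfin.lt_top
  set F : ℝ × ℝ → ℝ≥0∞ := fun p => Set.indicator {q : ℝ × ℝ | q.2 ≤ q.1} (fun _ => 1) p with hF
  have hFmeas : Measurable F := by
    apply Measurable.indicator measurable_const
    exact measurableSet_le measurable_snd measurable_fst
  have h4 : ∫⁻ t in Ioc u x, m (Ioc u t) ∂volume
      = ∫⁻ k in Ioc u x, ENNReal.ofReal (x - k) ∂m := by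
    have l1 : ∫⁻ t in Ioc u x, m (Ioc u t) ∂volume
        = ∫⁻ t in Ioc u x, ∫⁻ k in Ioc u x, F (t, k) ∂m ∂volume := by
      refine lintegral_congr_ae ?_
      filter_upwards [ae_restrict_mem measurableSet_Ioc] with t ht
      have : ∫⁻ k in Ioc u x, F (t, k) ∂m = ∫⁻ k in Ioc u x, (Ioc u t).indicator 1 k ∂m := by
        refine lintegral_congr_ae ?_
        filter_upwards [ae_restrict_mem measurableSet_Ioc] with k hk
        by_cases h : k ≤ t
        · simp [hF, h, Set.indicator_of_mem, Set.mem_Ioc, hk.1, Set.indicator,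
            Set.mem_setOf_eq]
        · simp [hF, h, Set.indicator, Set.mem_Ioc, Set.mem_setOf_eq]
      rw [this, lintegral_indicator_one measurableSet_Ioc,
        Measure.restrict_apply measurableSet_Ioc,
        inter_eq_self_of_subset_left (Ioc_subset_Ioc_right ht.2)]
    have l2 : ∫⁻ t in Ioc u x, ∫⁻ k in Ioc u x, F (t, k) ∂m ∂volume
        = ∫⁻ k in Ioc u x, ∫⁻ t in Ioc u x, F (t, k) ∂volume ∂m :=
      lintegral_lintegral_swap (hFmeas.aemeasurable)
    have l3 : ∫⁻ k in Ioc u x, ∫⁻ t in Ioc u x, F (t, k) ∂volume ∂m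
        = ∫⁻ k in Ioc u x, ENNReal.ofReal (x - k) ∂m := by
      refine lintegral_congr_ae ?_
      filter_upwards [ae_restrict_mem measurableSet_Ioc] with k hk
      have : (fun t => F (t, k)) = (Ici k).indicator 1 := by
        funext t
        by_cases h : k ≤ t
        · simp [hF, h, Set.indicator, Set.mem_setOf_eq]
        · simp [hF, h, Set.indicator, Set.mem_setOf_eq]
      rw [this, lintegral_indicator_one measurableSet_Ici,
        Measure.restrict_apply measurableSet_Ici]
      have : Ici k ∩ Ioc u x = Icc k x := by
        ext t; simp only [mem_inter_iff, mem_Ici, mem_Ioc, mem_Icc]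
        exact ⟨fun h => ⟨h.1, h.2.2⟩, fun h => ⟨h.1, hk.1.trans_le h.1, h.2⟩⟩
      rw [this, Real.volume_Icc]
    rw [l1, l2, l3]
  have h5 : ∫ k in Ioc u x, (x - k) ∂m
      = (∫⁻ k in Ioc u x, ENNReal.ofReal (x - k) ∂m).toReal := by
    rw [integral_eq_lintegral_of_nonneg_ae]
    · filter_upwards [ae_restrict_mem measurableSet_Ioc] with k hk
      exact sub_nonneg.2 hk.2
    · exact (continuous_const.sub continuous_id).aestronglyMeasurable
  rw [h5, ← h4, ← h3, ← h2]

end Key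
section Pointwise
variable {g₀ g' : ℝ → ℝ} {m : Measure ℝ} {a b gl : ℝ}

lemma pointwise_id
    (hkeyC : ∀ u y : ℝ, u ≤ y → ∫ k in Ioc u y, (y - k) ∂m = g₀ y - g₀ u - g' u * (y - u))
    (hmIoo : m (Ioo a b) = ENNReal.ofReal (gl - g' a))
    (hglge : g' a ≤ gl)
    (hm : ∀ u v : ℝ, u ≤ v → m (Ioc u v) = ENNReal.ofReal (g' v - g' u))
    (hab : a < b) (x : ℝ) :
    (Ioo a b).indicator g₀ x =
      (∫ k in Ioo a b, max (x - k) 0 ∂m) + max (x - a) 0 * g' a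
        + (Ioi a).indicator (fun _ => g₀ a) x
        - max (x - b) 0 * gl - (Ici b).indicator (fun _ => g₀ b) x := by
  have hfinIoc : m (Ioc a b) ≠ ⊤ := by rw [hm a b hab.le]; exact ENNReal.ofReal_ne_top
  have hbdd : ∀ f : ℝ → ℝ, Continuous f → ∀ s : Set ℝ, MeasurableSet s → s ⊆ Ioc a b →
      IntegrableOn f s m := by
    intro f hf s hsm hs
    obtain ⟨M, hM⟩ := (isCompact_Icc (a := a) (b := b)).exists_bound_of_continuousOn
      hf.continuousOn
    refine Measure.integrableOn_of_bounded
      (ne_top_of_le_ne_top hfinIoc (measure_mono hs)) hf.aestronglyMeasurable (M := M) ?_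
    filter_upwards [ae_restrict_mem hsm] with y hy
    exact hM y (Ioc_subset_Icc_self (hs hy))
  have hmaxc : Continuous (fun k : ℝ => max (x - k) 0) := by fun_prop
  rcases le_or_gt x a with hxa | hax
  · -- x ≤ a : everything is 0
    have h1 : ∫ k in Ioo a b, max (x - k) 0 ∂m = 0 := by
      rw [setIntegral_congr_fun measurableSet_Ioo
        (g := fun _ => (0:ℝ)) (fun k hk => max_eq_right (by linarith [hk.1]))]
      simp
    have e1 : (Ioo a b).indicator g₀ x = 0 :=
      indicator_of_notMem (fun h => absurd h.1 (not_lt.2 hxa)) g₀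
    have e2 : (Ioi a).indicator (fun _ => g₀ a) x = 0 :=
      indicator_of_notMem (not_lt.2 hxa) _
    have e3 : (Ici b).indicator (fun _ => g₀ b) x = 0 :=
      indicator_of_notMem (not_le.2 (by linarith)) _
    rw [h1, e1, e2, e3, max_eq_right (by linarith), max_eq_right (by linarith)]
    ring
  rcases lt_or_ge x b with hxb | hbx
  · -- a < x < b
    have hsplit : Ioc a x ∪ Ioo x b = Ioo a b := Ioc_union_Ioo_eq_Ioo hax.le hxb
    have hdisj : Disjoint (Ioc a x) (Ioo x b) := by
      rw [Set.disjoint_left]; rintro k ⟨_, h2⟩ ⟨h3, _⟩; exact absurd h3 (not_lt.2 h2)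
    have i1 : IntegrableOn (fun k : ℝ => max (x - k) 0) (Ioc a x) m :=
      hbdd _ hmaxc _ measurableSet_Ioc (Ioc_subset_Ioc_right hxb.le)
    have i2 : IntegrableOn (fun k : ℝ => max (x - k) 0) (Ioo x b) m :=
      hbdd _ hmaxc _ measurableSet_Ioo (fun k hk => ⟨hax.trans hk.1, hk.2.le⟩)
    have h1 : ∫ k in Ioo a b, max (x - k) 0 ∂m
        = (∫ k in Ioc a x, max (x - k) 0 ∂m) + ∫ k in Ioo x b, max (x - k) 0 ∂m := by
      rw [← hsplit, setIntegral_union hdisj measurableSet_Ioo i1 i2]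
    have h2 : ∫ k in Ioo x b, max (x - k) 0 ∂m = 0 := by
      rw [setIntegral_congr_fun measurableSet_Ioo
        (g := fun _ => (0:ℝ)) (fun k hk => max_eq_right (by linarith [hk.1]))]
      simp
    have h3 : ∫ k in Ioc a x, max (x - k) 0 ∂m = ∫ k in Ioc a x, (x - k) ∂m :=
      setIntegral_congr_fun measurableSet_Ioc
        (fun k hk => max_eq_left (by linarith [hk.2]))
    have e1 : (Ioo a b).indicator g₀ x = g₀ x :=
      indicator_of_mem (show x ∈ Ioo a b from ⟨hax, hxb⟩) g₀
    have e2 : (Ioi a).indicator (fun _ => g₀ a) x = g₀ a :=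
      indicator_of_mem (show x ∈ Ioi a from hax) _
    have e3 : (Ici b).indicator (fun _ => g₀ b) x = 0 :=
      indicator_of_notMem (not_le.2 hxb) _
    rw [e1, e2, e3, h1, h2, h3, hkeyC a x hax.le,
      max_eq_left (by linarith), max_eq_right (by linarith)]
    ring
  · -- b ≤ x
    have h1 : ∫ k in Ioo a b, max (x - k) 0 ∂m = ∫ k in Ioo a b, (x - k) ∂m :=
      setIntegral_congr_fun measurableSet_Ioo
        (fun k hk => max_eq_left (by linarith [hk.2]))
    have i1 : IntegrableOn (fun k : ℝ => b - k) (Ioo a b) m :=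
      hbdd _ (by fun_prop) _ measurableSet_Ioo Ioo_subset_Ioc_self
    have i2 : IntegrableOn (fun _ : ℝ => x - b) (Ioo a b) m :=
      hbdd _ continuous_const _ measurableSet_Ioo Ioo_subset_Ioc_self
    have h2 : ∫ k in Ioo a b, (x - k) ∂m
        = (∫ k in Ioo a b, (b - k) ∂m) + (m (Ioo a b)).toReal * (x - b) := by
      have heq : ∫ k in Ioo a b, (x - k) ∂m
          = ∫ k in Ioo a b, ((b - k) + (x - b)) ∂m := by
        apply setIntegral_congr_fun measurableSet_Ioo; intro k _; ring
      rw [heq, integral_add i1 i2, setIntegral_const, smul_eq_mul, measureReal_def]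
    have i3 : IntegrableOn (fun k : ℝ => b - k) {b} m :=
      hbdd _ (by fun_prop) _ (measurableSet_singleton b)
        (singleton_subset_iff.2 ⟨hab, le_rfl⟩)
    have h3 : ∫ k in Ioo a b, (b - k) ∂m = ∫ k in Ioc a b, (b - k) ∂m := by
      have hdisj : Disjoint (Ioo a b) ({b} : Set ℝ) := by
        rw [Set.disjoint_left]; rintro k ⟨_, h2⟩ rfl; exact absurd h2 (lt_irrefl _)
      have := setIntegral_union hdisj (measurableSet_singleton b) i1 i3
        (f := fun k : ℝ => b - k) (μ := m)
      rw [Ioo_union_right hab] at this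
      rw [this, integral_singleton]
      simp
    have hmr : (m (Ioo a b)).toReal = gl - g' a := by
      rw [hmIoo, ENNReal.toReal_ofReal (by linarith)]
    have e1 : (Ioo a b).indicator g₀ x = 0 :=
      indicator_of_notMem (fun h => absurd h.2 (not_lt.2 hbx)) g₀
    have e2 : (Ioi a).indicator (fun _ => g₀ a) x = g₀ a :=
      indicator_of_mem (show x ∈ Ioi a from lt_of_lt_of_le hab hbx) _
    have e3 : (Ici b).indicator (fun _ => g₀ b) x = g₀ b :=
      indicator_of_mem (show x ∈ Ici b from hbx) _
    rw [e1, e2, e3, h1, h2, h3, hkeyC a b hab.le, hmr,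
      max_eq_left (by linarith), max_eq_left (by linarith)]
    ring
end Pointwise
/-- Localized pricing formula -/
theorem localized_pricing (μ : Measure ℝ) [IsLocallyFiniteMeasure μ]
    (hmean : Integrable (fun x => x) (μ.restrict (Set.Ici (0:ℝ))))
    (g₀ g' : ℝ → ℝ) (hg : ConvexOn ℝ Set.univ g₀)
    (hg' : ∀ x : ℝ, HasDerivWithinAt g₀ (g' x) (Set.Ioi x) x)
    (a b : ℝ) (ha : 0 ≤ a) (hab : a < b)
    (gl : ℝ) (hgl : HasDerivWithinAt g₀ gl (Set.Iio b) b)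
    (m : Measure ℝ)
    (hm : ∀ u v : ℝ, u ≤ v → m (Set.Ioc u v) = ENNReal.ofReal (g' v - g' u))
    (C : ℝ → ℝ)
    (hC : ∀ k : ℝ, C k = ∫ x in Set.Ici (0:ℝ), max (x - k) 0 ∂μ) :
    ∫ x in Set.Ioo a b, g₀ x ∂μ
      = (∫ k in Set.Ioo a b, C k ∂m)
        + C a * g' a
        - ((μ (Set.Icc 0 a)).toReal - (μ (Set.Ici (0:ℝ))).toReal) * g₀ a
        - C b * gl
        + ((μ (Set.Ico 0 b)).toReal - (μ (Set.Ici (0:ℝ))).toReal) * g₀ b := by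
  have hmono : Monotone g' := gp_mono_s17 hg hg'
  have hkey : ∀ u y : ℝ, u ≤ y →
      ∫ k in Ioc u y, (y - k) ∂m = g₀ y - g₀ u - g' u * (y - u) :=
    fun u y h => keyC hmono (fun u v h => ftc_g hg hg' h) m hm h
  have hglge : g' a ≤ gl := by
    have h1 := rightd_le_slope hg hg' hab
    have h2 := hg.slope_le_of_hasDerivWithinAt_Iio (mem_univ a) (mem_univ b) hab hgl
    rw [slope_def_field] at h2; linarith
  have hmio : m (Ioo a b) = ENNReal.ofReal (gl - g' a) := m_Ioo hg hg' m hm hab hgl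
  have hpt := pointwise_id hkey hmio hglge hm hab
  -- finiteness of μ on [0, ∞)
  have hfin : μ (Ici (0:ℝ)) ≠ ⊤ := by
    have h1 : μ (Icc (0:ℝ) 1) ≠ ⊤ := (isCompact_Icc.measure_lt_top).ne
    have h2 : μ (Ioi (1:ℝ)) ≠ ⊤ := by
      have hsub : Ioi (1:ℝ) ⊆ Ici (0:ℝ) := fun y (hy : (1:ℝ) < y) => show (0:ℝ) ≤ y from le_of_lt (lt_trans one_pos hy)
      have e1 : μ (Ioi (1:ℝ)) = (μ.restrict (Ici (0:ℝ))) (Ioi 1) := by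
        rw [Measure.restrict_apply measurableSet_Ioi, inter_eq_left.2 hsub]
      have e2 : (μ.restrict (Ici (0:ℝ))) (Ioi 1)
          ≤ ∫⁻ x in Ici (0:ℝ), ENNReal.ofReal ‖x‖ ∂μ := by
        rw [← setLIntegral_one]
        calc ∫⁻ _ in Ioi (1:ℝ), 1 ∂(μ.restrict (Ici (0:ℝ)))
            ≤ ∫⁻ x in Ioi (1:ℝ), ENNReal.ofReal ‖x‖ ∂(μ.restrict (Ici (0:ℝ))) := by
              refine setLIntegral_mono' measurableSet_Ioi fun x hx => ?_
              rw [Real.norm_eq_abs, abs_of_nonneg (by linarith [mem_Ioi.1 hx])]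
              exact ENNReal.one_le_ofReal.2 (le_of_lt (mem_Ioi.1 hx))
          _ ≤ ∫⁻ x, ENNReal.ofReal ‖x‖ ∂(μ.restrict (Ici (0:ℝ))) :=
              setLIntegral_le_lintegral _ _
      have e3 : ∫⁻ x in Ici (0:ℝ), ENNReal.ofReal ‖x‖ ∂μ < ⊤ :=
        (hasFiniteIntegral_iff_norm _).1 hmean.2
      rw [e1]; exact (e2.trans_lt e3).ne
    have : μ (Ici (0:ℝ)) ≤ μ (Icc (0:ℝ) 1) + μ (Ioi 1) := by
      refine le_trans (measure_mono ?_) (measure_union_le _ _)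
      intro y hy
      rcases le_or_gt y 1 with h | h
      · exact Or.inl ⟨hy, h⟩
      · exact Or.inr h
    have hsum : μ (Icc (0:ℝ) 1) + μ (Ioi 1) ≠ ⊤ :=
      (ENNReal.add_lt_top.2 ⟨h1.lt_top, h2.lt_top⟩).ne
    exact ne_top_of_le_ne_top hsum this
  haveI hνfin : IsFiniteMeasure (μ.restrict (Ici (0:ℝ))) :=
    ⟨by rw [Measure.restrict_apply_univ]; exact hfin.lt_top⟩
  have hfinIoo : m (Ioo a b) ≠ ⊤ := by rw [hmio]; exact ENNReal.ofReal_ne_top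
  haveI hmfin : IsFiniteMeasure (m.restrict (Ioo a b)) :=
    ⟨by rw [Measure.restrict_apply_univ]; exact hfinIoo.lt_top⟩
  -- integrability of calls
  have intM : ∀ k : ℝ, Integrable (fun x => max (x - k) 0) (μ.restrict (Ici (0:ℝ))) := by
    intro k
    refine Integrable.mono' (g := fun x => |x| + |k|)
      ((hmean.norm).add (integrable_const _)) ?_ ?_
    · exact Continuous.aestronglyMeasurable (by fun_prop)
    · refine Eventually.of_forall fun x => ?_
      rw [Real.norm_eq_abs, abs_of_nonneg (le_max_right _ _)]
      have h1 : x - k ≤ |x| + |k| := by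
        cases abs_cases x with
        | inl h => cases abs_cases k with
          | inl h' => linarith [h.1, h'.1]
          | inr h' => linarith [h.1, h'.1]
        | inr h => cases abs_cases k with
          | inl h' => linarith [h.1, h'.1]
          | inr h' => linarith [h.1, h'.1]
      exact max_le h1 (by positivity)
  have hCnn : ∀ k, 0 ≤ C k := fun k => by
    rw [hC k]; exact integral_nonneg fun x => le_max_right _ _
  have hCanti : Antitone C := by
    intro k k' hkk'
    rw [hC k, hC k']
    exact integral_mono (intM k') (intM k) fun x =>
      max_le_max (sub_le_sub_left hkk' x) le_rfl
  -- bound for k in (a,b)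
  have hKbound : ∀ x k : ℝ, k ∈ Ioo a b → max (x - k) 0 ≤ |x| + |a| + |b| := by
    intro x k hk
    have h1 : |k| ≤ |a| + |b| := by
      cases abs_cases a with
      | inl h => cases abs_cases b with
        | inl h' => rw [abs_of_nonneg (by linarith [hk.1] : 0 ≤ k)]; linarith [hk.2]
        | inr h' => nlinarith [hk.1, hk.2, abs_nonneg k, le_abs_self k, neg_abs_le k]
      | inr h => cases abs_cases b with
        | inl h' => nlinarith [hk.1, hk.2, le_abs_self k, neg_abs_le k]
        | inr h' => nlinarith [hk.1, hk.2, le_abs_self k, neg_abs_le k]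
    have h2 : x - k ≤ |x| + |a| + |b| := by
      have := le_abs_self x
      have := neg_abs_le k
      linarith
    exact max_le h2 (by positivity)
  -- integrability of inner integrals over m
  have intK : ∀ x : ℝ, Integrable (fun k => max (x - k) 0) (m.restrict (Ioo a b)) := by
    intro x
    refine Measure.integrableOn_of_bounded hfinIoo
      (Continuous.aestronglyMeasurable (by fun_prop)) (M := |x| + |a| + |b|) ?_
    filter_upwards [ae_restrict_mem measurableSet_Ioo] with k hk
    rw [Real.norm_eq_abs, abs_of_nonneg (le_max_right _ _)]
    exact hKbound x k hk
  -- the inner integral as a function of x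
  have hI1mono : Monotone (fun x => ∫ k in Ioo a b, max (x - k) 0 ∂m) := by
    intro x x' hxx'
    exact integral_mono (intK x) (intK x') fun k =>
      max_le_max (sub_le_sub_right hxx' k) le_rfl
  have hI1meas : AEStronglyMeasurable (fun x => ∫ k in Ioo a b, max (x - k) 0 ∂m)
      (μ.restrict (Ici (0:ℝ))) := hI1mono.measurable.aestronglyMeasurable
  have hI1nn : ∀ x, 0 ≤ ∫ k in Ioo a b, max (x - k) 0 ∂m :=
    fun x => integral_nonneg fun k => le_max_right _ _
  have hI1bdd : ∀ x, (∫ k in Ioo a b, max (x - k) 0 ∂m)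
      ≤ (|x| + |a| + |b|) * (m (Ioo a b)).toReal := by
    intro x
    have h1 : (∫ k in Ioo a b, max (x - k) 0 ∂m)
        ≤ ∫ _ in Ioo a b, (|x| + |a| + |b|) ∂m := by
      refine integral_mono_ae (intK x) (integrable_const _) ?_
      filter_upwards [ae_restrict_mem measurableSet_Ioo] with k hk
      exact hKbound x k hk
    rw [setIntegral_const, smul_eq_mul, measureReal_def] at h1
    linarith [h1]
  have J1 : Integrable (fun x => ∫ k in Ioo a b, max (x - k) 0 ∂m)
      (μ.restrict (Ici (0:ℝ))) := by
    refine Integrable.mono'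
      (g := fun x => (|x| + |a| + |b|) * (m (Ioo a b)).toReal)
      (((hmean.norm.add (integrable_const _)).add (integrable_const _)).mul_const _)
      hI1meas (Eventually.of_forall fun x => ?_)
    rw [Real.norm_eq_abs, abs_of_nonneg (hI1nn x)]
    exact hI1bdd x
  have J2 : Integrable (fun x => max (x - a) 0 * g' a) (μ.restrict (Ici (0:ℝ))) :=
    (intM a).mul_const (g' a)
  have J3 : Integrable ((Ioi a).indicator fun _ => g₀ a) (μ.restrict (Ici (0:ℝ))) :=
    (integrable_const (g₀ a)).indicator measurableSet_Ioi
  have J4 : Integrable (fun x => max (x - b) 0 * gl) (μ.restrict (Ici (0:ℝ))) :=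
    (intM b).mul_const gl
  have J5 : Integrable ((Ici b).indicator fun _ => g₀ b) (μ.restrict (Ici (0:ℝ))) :=
    (integrable_const (g₀ b)).indicator measurableSet_Ici
  -- Tonelli step
  have hofReal_inner_ne : ∀ x : ℝ,
      (∫⁻ k in Ioo a b, ENNReal.ofReal (max (x - k) 0) ∂m) ≠ ⊤ := by
    intro x
    have hb : (∫⁻ k in Ioo a b, ENNReal.ofReal (max (x - k) 0) ∂m)
        ≤ ∫⁻ _ in Ioo a b, ENNReal.ofReal (|x| + |a| + |b|) ∂m := by
      refine lintegral_mono_ae ?_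
      filter_upwards [ae_restrict_mem measurableSet_Ioo] with k hk
      exact ENNReal.ofReal_le_ofReal (hKbound x k hk)
    rw [lintegral_const, Measure.restrict_apply_univ] at hb
    exact ne_top_of_le_ne_top
      (ENNReal.mul_ne_top ENNReal.ofReal_ne_top hfinIoo) hb
  have hIeqlint : ∀ x, (∫ k in Ioo a b, max (x - k) 0 ∂m)
      = (∫⁻ k in Ioo a b, ENNReal.ofReal (max (x - k) 0) ∂m).toReal := by
    intro x
    exact integral_eq_lintegral_of_nonneg_ae
      (f := fun k => max (x - k) 0)
      (Eventually.of_forall fun k => le_max_right _ _)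
      (Continuous.aestronglyMeasurable
        (by exact (continuous_const.sub continuous_id).max continuous_const))
  have hCflt : ∀ k : ℝ,
      (∫⁻ x in Ici (0:ℝ), ENNReal.ofReal (max (x - k) 0) ∂μ) ≠ ⊤ := by
    intro k
    have h1 := (hasFiniteIntegral_iff_norm _).1 (intM k).2
    refine ne_top_of_le_ne_top h1.ne (lintegral_mono fun x => ?_)
    exact ENNReal.ofReal_le_ofReal (le_abs_self _)
  have hCeq : ∀ k : ℝ, ENNReal.ofReal (C k)
      = ∫⁻ x in Ici (0:ℝ), ENNReal.ofReal (max (x - k) 0) ∂μ := by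
    intro k
    have hcm : Continuous (fun x : ℝ => max (x - k) 0) :=
      (continuous_id.sub continuous_const).max continuous_const
    have e := integral_eq_lintegral_of_nonneg_ae (μ := μ.restrict (Ici (0:ℝ)))
      (f := fun x => max (x - k) 0)
      (Eventually.of_forall fun x => le_max_right _ _)
      hcm.aestronglyMeasurable
    rw [hC k, e, ENNReal.ofReal_toReal (hCflt k)]
  have T1 : (∫ x in Ici (0:ℝ), (∫ k in Ioo a b, max (x - k) 0 ∂m) ∂μ)
      = ∫ k in Ioo a b, C k ∂m := by
    rw [integral_eq_lintegral_of_nonneg_ae (Eventually.of_forall hI1nn) hI1meas]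
    have e1 : (∫⁻ x in Ici (0:ℝ),
        ENNReal.ofReal (∫ k in Ioo a b, max (x - k) 0 ∂m) ∂μ)
        = ∫⁻ x in Ici (0:ℝ), ∫⁻ k in Ioo a b,
            ENNReal.ofReal (max (x - k) 0) ∂m ∂μ := by
      refine lintegral_congr fun x => ?_
      rw [hIeqlint x, ENNReal.ofReal_toReal (hofReal_inner_ne x)]
    have e2 : (∫⁻ x in Ici (0:ℝ), ∫⁻ k in Ioo a b,
          ENNReal.ofReal (max (x - k) 0) ∂m ∂μ)
        = ∫⁻ k in Ioo a b, ∫⁻ x in Ici (0:ℝ),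
            ENNReal.ofReal (max (x - k) 0) ∂μ ∂m := by
      refine lintegral_lintegral_swap ?_
      exact (ENNReal.measurable_ofReal.comp
        ((measurable_fst.sub measurable_snd).max measurable_const)).aemeasurable
    have e3 : (∫⁻ k in Ioo a b, ∫⁻ x in Ici (0:ℝ),
          ENNReal.ofReal (max (x - k) 0) ∂μ ∂m)
        = ∫⁻ k in Ioo a b, ENNReal.ofReal (C k) ∂m :=
      lintegral_congr fun k => (hCeq k).symm
    rw [e1, e2, e3, ← integral_eq_lintegral_of_nonneg_ae
      (Eventually.of_forall fun k => hCnn k)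
      (hCanti.measurable.aestronglyMeasurable)]
  -- remaining simple integrals
  have hsubIoi : Ioi a ⊆ Ici (0:ℝ) := fun y hy => le_of_lt (lt_of_le_of_lt ha hy)
  have hsubIci : Ici b ⊆ Ici (0:ℝ) := fun y hy => le_trans (le_trans ha hab.le) hy
  have T2 : (∫ x in Ici (0:ℝ), max (x - a) 0 * g' a ∂μ) = C a * g' a := by
    rw [integral_mul_const, ← hC a]
  have T4 : (∫ x in Ici (0:ℝ), max (x - b) 0 * gl ∂μ) = C b * gl := by
    rw [integral_mul_const, ← hC b]
  have T3 : (∫ x in Ici (0:ℝ), (Ioi a).indicator (fun _ => g₀ a) x ∂μ)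
      = (μ (Ioi a)).toReal * g₀ a := by
    rw [integral_indicator_const (g₀ a) measurableSet_Ioi, measureReal_def,
      Measure.restrict_apply measurableSet_Ioi,
      inter_eq_self_of_subset_left hsubIoi, smul_eq_mul]
  have T5 : (∫ x in Ici (0:ℝ), (Ici b).indicator (fun _ => g₀ b) x ∂μ)
      = (μ (Ici b)).toReal * g₀ b := by
    rw [integral_indicator_const (g₀ b) measurableSet_Ici, measureReal_def,
      Measure.restrict_apply measurableSet_Ici,
      inter_eq_self_of_subset_left hsubIci, smul_eq_mul]
  -- measure arithmetic
  have A3 : (μ (Icc 0 a)).toReal - (μ (Ici (0:ℝ))).toReal = -(μ (Ioi a)).toReal := by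
    have hdisj : Disjoint (Icc (0:ℝ) a) (Ioi a) := by
      rw [Set.disjoint_left]; rintro y ⟨_, h2⟩ h3; exact absurd h3 (not_lt.2 h2)
    have hun : μ (Ici (0:ℝ)) = μ (Icc 0 a) + μ (Ioi a) := by
      rw [← Icc_union_Ioi_eq_Ici ha, measure_union hdisj measurableSet_Ioi]
    have f1 : μ (Icc (0:ℝ) a) ≠ ⊤ :=
      ne_top_of_le_ne_top hfin (measure_mono fun y hy => hy.1)
    have f2 : μ (Ioi a) ≠ ⊤ := ne_top_of_le_ne_top hfin (measure_mono hsubIoi)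
    rw [hun, ENNReal.toReal_add f1 f2]; ring
  have A4 : (μ (Ico 0 b)).toReal - (μ (Ici (0:ℝ))).toReal = -(μ (Ici b)).toReal := by
    have hdisj : Disjoint (Ico (0:ℝ) b) (Ici b) := by
      rw [Set.disjoint_left]; rintro y ⟨_, h2⟩ h3; exact absurd h3 (not_le.2 h2)
    have hun : μ (Ici (0:ℝ)) = μ (Ico 0 b) + μ (Ici b) := by
      rw [← Ico_union_Ici_eq_Ici (le_trans ha hab.le), measure_union hdisj measurableSet_Ici]
    have f1 : μ (Ico (0:ℝ) b) ≠ ⊤ :=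
      ne_top_of_le_ne_top hfin (measure_mono fun y hy => hy.1)
    have f2 : μ (Ici b) ≠ ⊤ := ne_top_of_le_ne_top hfin (measure_mono hsubIci)
    rw [hun, ENNReal.toReal_add f1 f2]; ring
  -- put everything together
  have hsub0 : Ioo a b ⊆ Ici (0:ℝ) := fun y hy => le_of_lt (lt_of_le_of_lt ha hy.1)
  have hLHS : (∫ x in Ici (0:ℝ), (Ioo a b).indicator g₀ x ∂μ)
      = ∫ x in Ioo a b, g₀ x ∂μ := by
    rw [integral_indicator measurableSet_Ioo,
      Measure.restrict_restrict measurableSet_Ioo,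
      inter_eq_self_of_subset_left hsub0]
  calc ∫ x in Ioo a b, g₀ x ∂μ
      = ∫ x in Ici (0:ℝ), (Ioo a b).indicator g₀ x ∂μ := hLHS.symm
    _ = ∫ x in Ici (0:ℝ),
          ((∫ k in Ioo a b, max (x - k) 0 ∂m) + max (x - a) 0 * g' a
            + (Ioi a).indicator (fun _ => g₀ a) x
            - max (x - b) 0 * gl - (Ici b).indicator (fun _ => g₀ b) x) ∂μ :=
        integral_congr_ae (Eventually.of_forall fun x => hpt x)
    _ = (∫ x in Ici (0:ℝ), (∫ k in Ioo a b, max (x - k) 0 ∂m) ∂μ)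
          + (∫ x in Ici (0:ℝ), max (x - a) 0 * g' a ∂μ)
          + (∫ x in Ici (0:ℝ), (Ioi a).indicator (fun _ => g₀ a) x ∂μ)
          - (∫ x in Ici (0:ℝ), max (x - b) 0 * gl ∂μ)
          - (∫ x in Ici (0:ℝ), (Ici b).indicator (fun _ => g₀ b) x ∂μ) := by
        have E1 : (∫ x in Ici (0:ℝ),
              ((∫ k in Ioo a b, max (x - k) 0 ∂m) + max (x - a) 0 * g' a
                + (Ioi a).indicator (fun _ => g₀ a) x
                - max (x - b) 0 * gl - (Ici b).indicator (fun _ => g₀ b) x) ∂μ)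
            = (∫ x in Ici (0:ℝ),
              ((∫ k in Ioo a b, max (x - k) 0 ∂m) + max (x - a) 0 * g' a
                + (Ioi a).indicator (fun _ => g₀ a) x
                - max (x - b) 0 * gl) ∂μ)
              - ∫ x in Ici (0:ℝ), (Ici b).indicator (fun _ => g₀ b) x ∂μ :=
          integral_sub (((J1.add J2).add J3).sub J4) J5
        have E2 : (∫ x in Ici (0:ℝ),
              ((∫ k in Ioo a b, max (x - k) 0 ∂m) + max (x - a) 0 * g' a
                + (Ioi a).indicator (fun _ => g₀ a) x
                - max (x - b) 0 * gl) ∂μ)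
            = (∫ x in Ici (0:ℝ),
              ((∫ k in Ioo a b, max (x - k) 0 ∂m) + max (x - a) 0 * g' a
                + (Ioi a).indicator (fun _ => g₀ a) x) ∂μ)
              - ∫ x in Ici (0:ℝ), max (x - b) 0 * gl ∂μ :=
          integral_sub ((J1.add J2).add J3) J4
        have E3 : (∫ x in Ici (0:ℝ),
              ((∫ k in Ioo a b, max (x - k) 0 ∂m) + max (x - a) 0 * g' a
                + (Ioi a).indicator (fun _ => g₀ a) x) ∂μ)
            = (∫ x in Ici (0:ℝ),
              ((∫ k in Ioo a b, max (x - k) 0 ∂m) + max (x - a) 0 * g' a) ∂μ)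
              + ∫ x in Ici (0:ℝ), (Ioi a).indicator (fun _ => g₀ a) x ∂μ :=
          integral_add (J1.add J2) J3
        have E4 : (∫ x in Ici (0:ℝ),
              ((∫ k in Ioo a b, max (x - k) 0 ∂m) + max (x - a) 0 * g' a) ∂μ)
            = (∫ x in Ici (0:ℝ), (∫ k in Ioo a b, max (x - k) 0 ∂m) ∂μ)
              + ∫ x in Ici (0:ℝ), max (x - a) 0 * g' a ∂μ :=
          integral_add J1 J2
        rw [E1, E2, E3, E4]
    _ = (∫ k in Ioo a b, C k ∂m) + C a * g' a
          - ((μ (Icc 0 a)).toReal - (μ (Ici (0:ℝ))).toReal) * g₀ a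
          - C b * gl
          + ((μ (Ico 0 b)).toReal - (μ (Ici (0:ℝ))).toReal) * g₀ b := by
        rw [T1, T2, T3, T4, T5, A3, A4]; ring
end
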